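/- arXiv:2012.01712 — 9 statements merged into one kernel-verified Lean document; each statement's English description precedes it below -/
import Mathlib

section
/- For every integer r ≥ 1 and every complex number s with Re(s) > 1, the family ((m_1 m_2 ⋯ m_r)^{-s}) indexed by r-tuples of positive integers with 1 ≤ m_1 < m_2 < ⋯ < m_r is summable, and its sum ζ_r(s) satisfies the identity r·ζ_r(s) = Σ_{j=1}^{r} (−1)^{j−1} ζ_{r−j}(s) ζ(js), where ζ denotes the Riemann zeta function and ζ_0(s) is interpreted as 1. -/
/-!
`ζ_k(s)` is the `k`-th elementary symmetric function `e_k` of the absolutely summable family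
`(m^{-s})_{m ≥ 1}`, and `ζ(js)` is its `j`-th power sum `p_j`. Newton's identity
`k e_k = Σ_{j=1}^{k} (-1)^{j-1} e_{k-j} p_j` holds for every finite subfamily; since the family of
all finite products `∏_{m ∈ A} m^{-s}` is absolutely summable (its partial sums are bounded by
`∏_m (1 + m^{-Re s})`), the finite elementary symmetric sums converge to `ζ_k(s)` and the identity
passes to the limit.
-/

open Complex

/-- The Euler–Zagier multiple zeta-function with identical arguments:
`ζ_r(s) = Σ_{1 ≤ m_1 < m_2 < ⋯ < m_r} (m_1 m_2 ⋯ m_r)^{−s}`, the sum running over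
strictly increasing `r`-tuples of positive integers.  For `r = 0` the index type is a
singleton and the empty product gives `ζ_0(s) = 1`. -/
noncomputable def zetaEZ (r : ℕ) (s : ℂ) : ℂ :=
  ∑' f : {f : Fin r → ℕ+ // StrictMono f}, (∏ i, ((f.1 i : ℕ) : ℂ)) ^ (-s)

open Finset Filter Topology

lemma Finset.sum_antidiagonal_filter_fst_lt {M : Type*} [AddCommMonoid M] (k : ℕ)
    (f : ℕ → ℕ → M) :
    ∑ p ∈ antidiagonal k with p.1 < k, f p.1 p.2 = ∑ j ∈ Icc 1 k, f (k - j) j := by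
  refine sum_nbij' Prod.snd (fun j => (k - j, j)) ?_ ?_ ?_ (fun _ _ => rfl) ?_ <;>
    simp only [mem_filter, HasAntidiagonal.mem_antidiagonal, mem_Icc, Prod.forall,
      Prod.mk.injEq, and_imp, and_true]
  · omega
  · omega
  · omega
  · rintro a b rfl -
    rw [Nat.add_sub_cancel]

lemma neg_one_pow_add_mul_neg_one_pow_sub {R : Type*} [Monoid R] [HasDistribNeg R] {j k : ℕ}
    (hj : 1 ≤ j) (hjk : j ≤ k) : (-1 : R) ^ (k + 1) * (-1) ^ (k - j) = (-1) ^ (j - 1) := by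
  rw [← pow_add, show k + 1 + (k - j) = j - 1 + 2 * (k - j + 1) by omega, pow_add, pow_mul,
    neg_one_sq, one_pow, mul_one]

theorem Finset.mul_sum_powersetCard_prod {ι R : Type*} [CommRing R] (T : Finset ι) (x : ι → R)
    (k : ℕ) :
    (k : R) * ∑ A ∈ T.powersetCard k, ∏ i ∈ A, x i =
      ∑ j ∈ Icc 1 k, (-1) ^ (j - 1) * (∑ A ∈ T.powersetCard (k - j), ∏ i ∈ A, x i) *
        ∑ i ∈ T, x i ^ j := by
  have hesymm (n : ℕ) : MvPolynomial.aeval (fun i : T => x i) (MvPolynomial.esymm T R n) =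
      ∑ A ∈ T.powersetCard n, ∏ i ∈ A, x i := by
    rw [MvPolynomial.aeval_esymm_eq_multiset_esymm, ← esymm_map_val]
    exact congrArg (Multiset.esymm · n) (Multiset.attach_map_val' T.val x)
  have hpsum (n : ℕ) : MvPolynomial.aeval (fun i : T => x i) (MvPolynomial.psum T R n) =
      ∑ i ∈ T, x i ^ n := by
    simp [MvPolynomial.psum, sum_attach T (fun i => x i ^ n)]
  have h := congrArg (MvPolynomial.aeval fun i : T => x i) (MvPolynomial.mul_esymm_eq_sum T R k)
  simp only [map_mul, map_natCast, map_pow, map_neg, map_one, map_sum, hesymm, hpsum] at h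
  rw [h, sum_antidiagonal_filter_fst_lt k fun a b =>
    (-1) ^ a * (∑ A ∈ T.powersetCard a, ∏ i ∈ A, x i) * ∑ i ∈ T, x i ^ b, mul_sum]
  refine sum_congr rfl fun j hj => ?_
  rw [← neg_one_pow_add_mul_neg_one_pow_sub (mem_Icc.mp hj).1 (mem_Icc.mp hj).2]
  ring

noncomputable def esymmTsum {ι R : Type*} [CommSemiring R] [TopologicalSpace R] (x : ι → R)
    (k : ℕ) : R :=
  ∑' A : Set.powersetCard ι k, ∏ i ∈ A.1, x i

section Analytic

variable {ι R : Type*} [NormedCommRing R] [NormOneClass R] [CompleteSpace R] {x : ι → R}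

theorem summable_prod_powersetCard (hx : Summable fun i => ‖x i‖) (k : ℕ) :
    Summable fun A : Set.powersetCard ι k => ∏ i ∈ A.1, x i :=
  (summable_finsetProd_of_summable_norm hx).subtype _

theorem tendsto_sum_powersetCard_prod (hx : Summable fun i => ‖x i‖) (k : ℕ) :
    Tendsto (fun T : Finset ι => ∑ A ∈ T.powersetCard k, ∏ i ∈ A, x i) atTop
      (𝓝 (esymmTsum x k)) := by
  have h := (hasSum_subtype_iff_indicator (f := fun A : Finset ι => ∏ i ∈ A, x i)
    (s := Set.powersetCard ι k)).mp (summable_prod_powersetCard hx k).hasSum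
  refine (h.comp tendsto_finset_powerset_atTop_atTop).congr fun T => ?_
  classical
  simp only [Function.comp_apply, powersetCard_eq_filter, sum_filter, Set.indicator_apply,
    Set.powersetCard.mem_iff]

theorem Summable.pow_of_norm (hx : Summable fun i => ‖x i‖) {j : ℕ} (hj : j ≠ 0) :
    Summable fun i => x i ^ j := by
  refine hx.of_norm_bounded_eventually ?_
  filter_upwards [hx.tendsto_cofinite_zero.eventually (ge_mem_nhds zero_lt_one)] with i hi
  exact (norm_pow_le _ _).trans (pow_le_of_le_one (norm_nonneg _) hi hj)

theorem mul_esymmTsum_eq_sum (hx : Summable fun i => ‖x i‖) (k : ℕ) :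
    (k : R) * esymmTsum x k =
      ∑ j ∈ Icc 1 k, (-1) ^ (j - 1) * esymmTsum x (k - j) * ∑' i, x i ^ j := by
  refine tendsto_nhds_unique ((tendsto_sum_powersetCard_prod hx k).const_mul _) ?_
  have hpsum (j : ℕ) (hj : j ∈ Icc 1 k) :
      Tendsto (fun T : Finset ι => ∑ i ∈ T, x i ^ j) atTop (𝓝 (∑' i, x i ^ j)) :=
    (hx.pow_of_norm (Nat.one_le_iff_ne_zero.mp (mem_Icc.mp hj).1)).hasSum
  refine (tendsto_finsetSum _ fun j hj =>
    ((tendsto_sum_powersetCard_prod hx (k - j)).const_mul _).mul (hpsum j hj)).congr fun T => ?_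
  exact (T.mul_sum_powersetCard_prod x k).symm

end Analytic

def strictMonoEquivPowersetCard (α : Type*) [LinearOrder α] (k : ℕ) :
    {f : Fin k → α // StrictMono f} ≃ Set.powersetCard α k where
  toFun f := Set.powersetCard.ofFinEmbEquiv (OrderEmbedding.ofStrictMono f.1 f.2)
  invFun A :=
    ⟨Set.powersetCard.ofFinEmbEquiv.symm A, (Set.powersetCard.ofFinEmbEquiv.symm A).strictMono⟩
  left_inv f := by simp
  right_inv := Set.powersetCard.ofFinEmbEquiv.apply_symm_apply

lemma prod_strictMonoEquivPowersetCard {α M : Type*} [LinearOrder α] [CommMonoid M] {k : ℕ}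
    (f : {f : Fin k → α // StrictMono f}) (g : α → M) :
    ∏ a ∈ (strictMonoEquivPowersetCard α k f).1, g a = ∏ i, g (f.1 i) :=
  prod_map _ _ _

lemma natCast_prod_cpow {ι : Type*} (t : Finset ι) (g : ι → ℕ) (w : ℂ) :
    ((∏ i ∈ t, g i : ℕ) : ℂ) ^ w = ∏ i ∈ t, (g i : ℂ) ^ w :=
  prod_hom_rel (r := fun (n : ℕ) (z : ℂ) => (n : ℂ) ^ w = z) (by simp)
    fun a b c h => by rw [Nat.cast_mul, natCast_mul_natCast_cpow, h]

lemma summable_norm_pnat_cpow_neg {s : ℂ} (hs : 1 < s.re) :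
    Summable fun m : ℕ+ => ‖((m : ℕ) : ℂ) ^ (-s)‖ :=
  (summable_riemannZetaSummand hs).comp_injective PNat.coe_injective

lemma hasSum_pnat_cpow_neg {s : ℂ} (hs : 1 < s.re) :
    HasSum (fun m : ℕ+ => ((m : ℕ) : ℂ) ^ (-s)) (riemannZeta s) := by
  have hnat : HasSum (fun n : ℕ => (n : ℂ) ^ (-s)) (riemannZeta s) := by
    simpa only [zeta_eq_tsum_one_div_nat_cpow hs, one_div, cpow_neg] using
      (Complex.summable_one_div_nat_cpow.mpr hs).hasSum
  refine hasSum_pnat_iff (f := fun n : ℕ => (n : ℂ) ^ (-s)) |>.mpr ?_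
  rwa [Nat.cast_zero, zero_cpow (neg_ne_zero.mpr (ne_zero_of_one_lt_re hs)), add_zero]

lemma cpow_neg_prod_eq_prod_strictMonoEquivPowersetCard {k : ℕ} (s : ℂ)
    (f : {f : Fin k → ℕ+ // StrictMono f}) :
    (∏ i, ((f.1 i : ℕ) : ℂ)) ^ (-s) =
      ∏ m ∈ (strictMonoEquivPowersetCard ℕ+ k f).1, ((m : ℕ) : ℂ) ^ (-s) := by
  rw [prod_strictMonoEquivPowersetCard, ← natCast_prod_cpow, Nat.cast_prod]

theorem zetaEZ_eq_esymmTsum (k : ℕ) (s : ℂ) :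
    zetaEZ k s = esymmTsum (fun m : ℕ+ => ((m : ℕ) : ℂ) ^ (-s)) k := by
  rw [zetaEZ, esymmTsum, ← (strictMonoEquivPowersetCard ℕ+ k).tsum_eq]
  exact tsum_congr (cpow_neg_prod_eq_prod_strictMonoEquivPowersetCard s)

theorem summable_cpow_neg_prod_strictMono {s : ℂ} (hs : 1 < s.re) (k : ℕ) :
    Summable fun f : {f : Fin k → ℕ+ // StrictMono f} => (∏ i, ((f.1 i : ℕ) : ℂ)) ^ (-s) :=
  ((strictMonoEquivPowersetCard ℕ+ k).summable_iff.mpr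
    (summable_prod_powersetCard (summable_norm_pnat_cpow_neg hs) k)).congr fun f =>
      (cpow_neg_prod_eq_prod_strictMonoEquivPowersetCard s f).symm

lemma tsum_pnat_cpow_neg_pow {s : ℂ} (hs : 1 < s.re) {j : ℕ} (hj : 1 ≤ j) :
    ∑' m : ℕ+, (((m : ℕ) : ℂ) ^ (-s)) ^ j = riemannZeta (j * s) := by
  have hre : 1 < ((j : ℂ) * s).re := by
    rw [← ofReal_natCast, re_ofReal_mul]
    nlinarith [(Nat.one_le_cast (α := ℝ)).mpr hj]
  simp_rw [← cpow_nat_mul, mul_neg]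
  exact (hasSum_pnat_cpow_neg hre).tsum_eq

theorem euler_zagier_summable_and_newton_identity_general (r : ℕ) (s : ℂ)
    (hs : 1 < s.re) :
    Summable (fun f : {f : Fin r → ℕ+ // StrictMono f} =>
      (∏ i, ((f.1 i : ℕ) : ℂ)) ^ (-s)) ∧
    (r : ℂ) * zetaEZ r s =
      ∑ j ∈ Finset.Icc 1 r,
        (-1 : ℂ) ^ (j - 1) * zetaEZ (r - j) s * riemannZeta ((j : ℂ) * s) := by
  refine ⟨summable_cpow_neg_prod_strictMono hs r, ?_⟩
  rw [zetaEZ_eq_esymmTsum, mul_esymmTsum_eq_sum (summable_norm_pnat_cpow_neg hs)]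
  refine sum_congr rfl fun j hj => ?_
  rw [zetaEZ_eq_esymmTsum, tsum_pnat_cpow_neg_pow hs (mem_Icc.mp hj).1]

theorem euler_zagier_summable_and_newton_identity (r : ℕ) (hr : 1 ≤ r) (s : ℂ)
    (hs : 1 < s.re) :
    Summable (fun f : {f : Fin r → ℕ+ // StrictMono f} =>
      (∏ i, ((f.1 i : ℕ) : ℂ)) ^ (-s)) ∧
    (r : ℂ) * zetaEZ r s =
      ∑ j ∈ Finset.Icc 1 r,
        (-1 : ℂ) ^ (j - 1) * zetaEZ (r - j) s * riemannZeta ((j : ℂ) * s) :=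
  euler_zagier_summable_and_newton_identity_general r s hs
end

section
/- Let r ≥ 1 and let s be a real number with 0 ≤ s < 1/r. Then Z_r(s) is a real number, and (−1)^r · Z_r(s) > 0; that is, Z_r(s) is positive for even r and negative for odd r. In particular Z_r(s) ≠ 0 on the interval [0, 1/r). -/
open Filter Topology Complex

/-- The meromorphic continuation of the Euler–Zagier multiple zeta-function with
identical arguments, defined recursively by Newton's identities: `Z 0 s = 1` and
`Z r s = (1/r) · Σ_{j=1}^{r} (−1)^{j−1} Z (r−j) s · ζ(js)` (here the summation index
`i = j − 1` runs over `Finset.range r`), where `ζ` is the analytically continued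
Riemann zeta function. -/
noncomputable def Z : ℕ → ℂ → ℂ
  | 0, _ => 1
  | (r + 1), s =>
      (1 / ((r : ℂ) + 1)) *
        ∑ i ∈ Finset.range (r + 1),
          (-1 : ℂ) ^ i * Z (r - i) s * riemannZeta (((i : ℂ) + 1) * s)

/-!
For real `0 < x < 1` the alternating series `η(x) = ∑ (-1)^(n+1) n^(-x)`, grouped in pairs
`(2k+1)^(-x) - (2k+2)^(-x) > 0`, is positive. The grouped series is holomorphic on `re s > 0`, so
by the identity theorem it equals the entire function `ZMod.LFunction altSign`, which is
`(1 - 2^(1-s)) ζ(s)`; as `1 - 2^(1-x) < 0`, this gives `ζ(x) < 0` on `[0, 1)`.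
When `r s < 1`, every `ζ((i+1)s)` in the recursion for `Z r s` is thus negative, and by induction
each summand of `(-1)^r Z r s` is positive in the complex order.
-/

open scoped ComplexOrder

lemma norm_ofReal_cpow_neg_sub_ofReal_cpow_neg_le {a b : ℝ} (ha : 0 < a) (hab : a ≤ b) {s : ℂ}
    (hs : -1 ≤ s.re) :
    ‖(a : ℂ) ^ (-s) - (b : ℂ) ^ (-s)‖ ≤ ‖s‖ * a ^ (-(s.re + 1)) * (b - a) := by
  have hderiv : ∀ t ∈ Set.Icc a b, HasDerivWithinAt (fun t : ℝ ↦ (t : ℂ) ^ (-s))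
      (-s * (t : ℂ) ^ (-s - 1)) (Set.Icc a b) t := fun t ht ↦
    ((hasStrictDerivAt_cpow_const (ofReal_mem_slitPlane.mpr (ha.trans_le ht.1))).hasDerivAt
      |>.comp_ofReal).hasDerivWithinAt
  have hbound : ∀ t ∈ Set.Ico a b, ‖-s * (t : ℂ) ^ (-s - 1)‖ ≤ ‖s‖ * a ^ (-(s.re + 1)) := by
    intro t ht
    rw [norm_mul, norm_neg, norm_cpow_eq_rpow_re_of_pos (ha.trans_le ht.1)]
    have hexp : (-s - 1).re = -(s.re + 1) := by simp only [sub_re, neg_re, one_re]; ring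
    rw [hexp]
    exact mul_le_mul_of_nonneg_left (Real.rpow_le_rpow_of_nonpos ha ht.1 (by linarith))
      (norm_nonneg s)
  rw [norm_sub_rev]
  exact norm_image_sub_le_of_norm_deriv_le_segment' hderiv hbound b (Set.right_mem_Icc.mpr hab)

noncomputable def etaTerm (k : ℕ) (s : ℂ) : ℂ :=
  ((2 * k + 1 : ℕ) : ℂ) ^ (-s) - ((2 * k + 2 : ℕ) : ℂ) ^ (-s)

noncomputable def etaSeries (s : ℂ) : ℂ := ∑' k, etaTerm k s

lemma norm_etaTerm_le (k : ℕ) {s : ℂ} (hs : -1 ≤ s.re) :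
    ‖etaTerm k s‖ ≤ ‖s‖ * ((2 * k + 1 : ℕ) : ℝ) ^ (-(s.re + 1)) := by
  have h := norm_ofReal_cpow_neg_sub_ofReal_cpow_neg_le (a := ((2 * k + 1 : ℕ) : ℝ))
    (b := ((2 * k + 2 : ℕ) : ℝ)) (by positivity) (by gcongr; omega) hs
  simpa [etaTerm, add_sub_add_left_eq_sub, show (2 : ℝ) - 1 = 1 by norm_num] using h

lemma summable_rpow_two_mul_add_one {p : ℝ} (hp : p < -1) :
    Summable fun k : ℕ ↦ ((2 * k + 1 : ℕ) : ℝ) ^ p :=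
  (Real.summable_nat_rpow.mpr hp).comp_injective fun _ _ h ↦ by simpa using h

lemma differentiableOn_etaSeries : DifferentiableOn ℂ etaSeries {s | 0 < s.re} := by
  intro s₀ hs₀
  have hre₀ : 0 < s₀.re := hs₀
  set U := {s : ℂ | s₀.re / 2 < s.re} ∩ Metric.ball 0 (‖s₀‖ + 1)
  have hU : IsOpen U := (isOpen_lt continuous_const continuous_re).inter Metric.isOpen_ball
  have hs₀U : s₀ ∈ U := ⟨show s₀.re / 2 < s₀.re by linarith, by simp⟩
  have hbound : ∀ k, ∀ s ∈ U,
      ‖etaTerm k s‖ ≤ (‖s₀‖ + 1) * ((2 * k + 1 : ℕ) : ℝ) ^ (-(s₀.re / 2 + 1)) := by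
    intro k s ⟨hre, hnorm⟩
    simp only [Set.mem_ofPred_eq, Metric.mem_ball, dist_zero_right] at hre hnorm
    refine (norm_etaTerm_le k (by linarith)).trans (mul_le_mul hnorm.le ?_ (by positivity)
      (by positivity))
    exact Real.rpow_le_rpow_of_exponent_le (by simp) (by linarith)
  have hdiff : DifferentiableOn ℂ etaSeries U :=
    Complex.differentiableOn_tsum_of_summable_norm
      ((summable_rpow_two_mul_add_one (by linarith)).mul_left _)
      (fun k ↦ by unfold etaTerm; fun_prop (disch := simp)) hU hbound
  exact (hdiff.differentiableAt (hU.mem_nhds hs₀U)).differentiableWithinAt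

/-- `altSign n` is `(-1)^(n+1)`, so `ZMod.LFunction altSign` is the Dirichlet eta function. -/
noncomputable def altSign (j : ZMod 2) : ℂ := if j = 0 then -1 else 1

lemma sum_altSign : ∑ j, altSign j = 0 := by
  simp [altSign, show (Finset.univ : Finset (ZMod 2)) = {0, 1} from rfl]

lemma altSign_natCast_two_mul_add_one (k : ℕ) : altSign (2 * k + 1 : ℕ) = 1 := by
  have hodd : ((2 * k + 1 : ℕ) : ZMod 2) ≠ 0 := by
    rw [Ne, ZMod.natCast_eq_zero_iff]; omega
  rw [altSign, if_neg hodd]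

lemma altSign_natCast_two_mul_add_two (k : ℕ) : altSign (2 * k + 2 : ℕ) = -1 := by
  have heven : ((2 * k + 2 : ℕ) : ZMod 2) = 0 := by
    rw [ZMod.natCast_eq_zero_iff]; omega
  rw [altSign, if_pos heven]

lemma LFunction_altSign_eq_etaSeries_of_one_lt_re {s : ℂ} (hs : 1 < s.re) :
    ZMod.LFunction altSign s = etaSeries s := by
  set f := LSeries.term (fun n : ℕ ↦ altSign n) s
  have hf : Summable f := ZMod.LSeriesSummable_of_one_lt_re altSign hs
  have hodd : Summable fun k ↦ f (2 * k + 1) := hf.comp_injective fun _ _ h ↦ by simpa using h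
  have heven : Summable fun k ↦ f (2 * k + 1 + 1) :=
    hf.comp_injective fun _ _ h ↦ by simpa using h
  have hpair : ∀ k : ℕ, f (2 * k + 1) + f (2 * k + 1 + 1) = etaTerm k s := by
    intro k
    simp only [f, LSeries.term_of_ne_zero (Nat.succ_ne_zero _),
      altSign_natCast_two_mul_add_one, altSign_natCast_two_mul_add_two, etaTerm, cpow_neg]
    ring
  calc ZMod.LFunction altSign s = ∑' n, f (n + 1) := by
        rw [ZMod.LFunction_eq_LSeries altSign hs, LSeries, hf.tsum_eq_zero_add,
          show f 0 = 0 from LSeries.term_zero _ _, zero_add]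
    _ = ∑' k, (f (2 * k + 1) + f (2 * k + 1 + 1)) := by
        rw [hodd.tsum_add heven, tsum_even_add_odd (f := fun n ↦ f (n + 1)) hodd heven]
    _ = etaSeries s := tsum_congr hpair

lemma LFunction_altSign_eq_etaSeries {s : ℂ} (hs : 0 < s.re) :
    ZMod.LFunction altSign s = etaSeries s := by
  have hU : IsOpen {z : ℂ | 0 < z.re} := isOpen_lt continuous_const continuous_re
  refine AnalyticOnNhd.eqOn_of_preconnected_of_eventuallyEq (z₀ := 2)
    ((ZMod.differentiable_LFunction_of_sum_zero sum_altSign).differentiableOn.analyticOnNhd hU)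
    (differentiableOn_etaSeries.analyticOnNhd hU) (convex_halfSpace_re_gt 0).isPreconnected
    (by simp) ?_ hs
  filter_upwards [(isOpen_lt continuous_const continuous_re).mem_nhds
    (show (1 : ℝ) < (2 : ℂ).re by simp)] with z hz
  exact LFunction_altSign_eq_etaSeries_of_one_lt_re hz

lemma LFunction_altSign_eq_mul_riemannZeta {s : ℂ} (hs : s ≠ 1) :
    ZMod.LFunction altSign s = (1 - 2 ^ (1 - s)) * riemannZeta s := by
  -- Both sides unfold to Hurwitz zeta values at `0` and `1/2`; comparing with the trivial
  -- character `χ₀` mod 2 gives `L(altSign) = L(χ₀) - 2^(-s) ζ` and `L(χ₀) = (1 - 2^(-s)) ζ`.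
  have htriv := DirichletCharacter.LFunctionTrivChar_eq_mul_riemannZeta (N := 2) hs
  have hχ₀ : (1 : DirichletCharacter ℂ 2) 0 = 0 := MulChar.map_nonunit _ not_isUnit_zero
  have huniv : (Finset.univ : Finset (ZMod 2)) = {0, 1} := rfl
  simp only [DirichletCharacter.LFunctionTrivChar, DirichletCharacter.LFunction, ZMod.LFunction,
    huniv, Finset.sum_pair zero_ne_one, Nat.prime_two.primeFactors, Finset.prod_singleton, hχ₀,
    map_one, map_zero, HurwitzZeta.hurwitzZeta_zero, altSign, if_pos, if_neg one_ne_zero]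
    at htriv ⊢
  rw [sub_eq_add_neg 1 s, cpow_add _ _ two_ne_zero, cpow_one]
  linear_combination htriv

lemma etaSeries_ofReal_pos {x : ℝ} (hx : 0 < x) : 0 < etaSeries x := by
  have hterm : ∀ k, 0 < etaTerm k x := by
    intro k
    rw [etaTerm, ← ofReal_neg, ← ofReal_natCast, ← ofReal_natCast, ← ofReal_cpow (by positivity),
      ← ofReal_cpow (by positivity), ← ofReal_sub, zero_lt_real, sub_pos]
    exact Real.rpow_lt_rpow_of_neg (by positivity) (by gcongr; omega) (by linarith)
  refine Summable.tsum_pos ?_ (fun k ↦ (hterm k).le) 0 (hterm 0)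
  refine .of_norm_bounded ((summable_rpow_two_mul_add_one (p := -(x + 1)) (by linarith)).mul_left
    ‖(x : ℂ)‖) fun k ↦ ?_
  simpa using norm_etaTerm_le k (s := x) (by simp only [ofReal_re]; linarith)

lemma riemannZeta_neg_of_nonneg_of_lt_one {x : ℝ} (h0 : 0 ≤ x) (h1 : x < 1) :
    riemannZeta x < 0 := by
  rcases h0.eq_or_lt with rfl | hx
  · rw [ofReal_zero, riemannZeta_zero]
    norm_num
  have hfactor : (1 : ℂ) - 2 ^ (1 - (x : ℂ)) = ((1 - 2 ^ (1 - x) : ℝ) : ℂ) := by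
    rw [ofReal_sub, ofReal_one, ofReal_cpow zero_le_two, ofReal_sub, ofReal_one, ofReal_ofNat]
  have hneg : 1 - (2 : ℝ) ^ (1 - x) < 0 :=
    sub_neg.mpr (Real.one_lt_rpow one_lt_two (by linarith))
  have heta := (LFunction_altSign_eq_etaSeries (by simpa using hx)).symm.trans
    (LFunction_altSign_eq_mul_riemannZeta (s := x) (by exact_mod_cast h1.ne))
  rw [hfactor] at heta
  rw [← mul_div_cancel_left₀ (riemannZeta x) (ofReal_ne_zero.mpr hneg.ne), ← heta, div_eq_mul_inv,
    ← ofReal_inv]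
  exact mul_neg_of_pos_of_neg (etaSeries_ofReal_pos hx) (real_lt_real.mpr (inv_lt_zero.mpr hneg))

theorem neg_one_pow_mul_Z_pos {s : ℝ} (hs : 0 ≤ s) {r : ℕ} (hrs : r * s < 1) :
    0 < (-1) ^ r * Z r s := by
  induction r using Nat.strong_induction_on with
  | _ r ih =>
  cases r with
  | zero => simp [Z]
  | succ m =>
    have hle : ∀ j ≤ m + 1, (j : ℝ) * s < 1 := fun j hj ↦
      (mul_le_mul_of_nonneg_right (Nat.cast_le.mpr hj) hs).trans_lt hrs
    have hterm : ∀ i ∈ Finset.range (m + 1),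
        0 < (-1) ^ (m + 1) * ((-1) ^ i * Z (m - i) s * riemannZeta ((i + 1) * s)) := by
      intro i hi
      obtain ⟨n, rfl⟩ : ∃ n, m = n + i := ⟨m - i, by have := Finset.mem_range.mp hi; omega⟩
      have hZ : 0 < (-1) ^ n * Z n s := ih n (by omega) (hle n (by omega))
      have hζ : riemannZeta ((i + 1) * s) < 0 := by
        simpa using riemannZeta_neg_of_nonneg_of_lt_one (by positivity) (hle (i + 1) (by omega))
      have hsign : (-1 : ℂ) ^ (n + i + 1) * (-1) ^ i = -(-1) ^ n := by
        rw [← pow_add, show n + i + 1 + i = n + (i + i) + 1 by omega, pow_succ, pow_add,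
          (Even.add_self i).neg_one_pow]
        ring
      calc (0 : ℂ) < (-1) ^ n * Z n s * -riemannZeta ((i + 1) * s) :=
            mul_pos hZ (neg_pos.mpr hζ)
        _ = _ := by
          rw [Nat.add_sub_cancel]
          linear_combination (-Z n s * riemannZeta ((i + 1) * s)) * hsign
    rw [Z, mul_left_comm, Finset.mul_sum]
    exact mul_pos (by positivity) (Finset.sum_pos hterm Finset.nonempty_range_add_one)

theorem multiple_zeta_sign_on_initial_interval_general (r : ℕ) (s : ℝ)
    (h0 : 0 ≤ s) (h1 : s < 1 / r) :
    (Z r s).im = 0 ∧ 0 < (-1 : ℝ) ^ r * (Z r s).re ∧ Z r s ≠ 0 := by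
  have hrs : r * s < 1 := by
    rcases r.eq_zero_or_pos with rfl | hr
    · simp
    · exact (lt_div_iff₀' (by positivity)).mp h1
  have hpos := neg_one_pow_mul_Z_pos h0 hrs
  rw [show (-1 : ℂ) ^ r = ((-1 : ℝ) ^ r : ℝ) by push_cast; rfl, Complex.pos_iff, re_ofReal_mul,
    im_ofReal_mul] at hpos
  obtain ⟨hre, him⟩ := hpos
  refine ⟨?_, hre, fun hZ ↦ by simp [hZ] at hre⟩
  exact (mul_eq_zero.mp him.symm).resolve_left (pow_ne_zero _ (by norm_num))

theorem multiple_zeta_sign_on_initial_interval (r : ℕ) (hr : 1 ≤ r) (s : ℝ)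
    (h0 : 0 ≤ s) (h1 : s < 1 / r) :
    (Z r s).im = 0 ∧ 0 < (-1 : ℝ) ^ r * (Z r s).re ∧ Z r s ≠ 0 :=
  multiple_zeta_sign_on_initial_interval_general r s h0 h1
end

section
/- For every integer r ≥ 1, the function Z_r is complex differentiable at every point s ∈ ℂ that is not of the form 1/k for some integer k with 1 ≤ k ≤ r. -/
open Filter Topology Complex

/-! Each `Z r` is a polynomial in `ζ(s), ζ(2s), …, ζ(rs)`, and `ζ(js)` is differentiable
away from its only pole `js = 1`; strong induction along the recursion does the rest. -/

lemma Z_zero : Z 0 = fun _ => 1 := by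
  funext s
  rw [Z]

lemma Z_succ (r : ℕ) :
    Z (r + 1) = fun s => (1 / ((r : ℂ) + 1)) *
      ∑ i ∈ Finset.range (r + 1), (-1 : ℂ) ^ i * Z (r - i) s * riemannZeta (((i : ℂ) + 1) * s) := by
  funext s
  rw [Z]

lemma differentiableAt_riemannZeta_const_mul {c s : ℂ} (h : c * s ≠ 1) :
    DifferentiableAt ℂ (fun t => riemannZeta (c * t)) s :=
  (differentiableAt_riemannZeta h).comp s (differentiableAt_id.const_mul c)

lemma natCast_mul_ne_one_of_ne_one_div {k : ℕ} {s : ℂ} (hs : s ≠ 1 / (k : ℂ)) :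
    (k : ℂ) * s ≠ 1 :=
  fun h => hs (eq_one_div_of_mul_eq_one_right h)

theorem multiple_zeta_differentiableAt_general (r : ℕ) (s : ℂ)
    (hs : ∀ k : ℕ, 1 ≤ k → k ≤ r → s ≠ 1 / (k : ℂ)) :
    DifferentiableAt ℂ (Z r) s := by
  induction r using Nat.strong_induction_on with
  | _ r ih =>
  cases r with
  | zero => exact Z_zero ▸ differentiableAt_const (1 : ℂ)
  | succ r =>
    rw [Z_succ]
    refine (DifferentiableAt.fun_sum fun i hi => ?_).const_mul _
    have hir : i ≤ r := Nat.lt_succ_iff.mp (Finset.mem_range.mp hi)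
    have hZ : DifferentiableAt ℂ (Z (r - i)) s :=
      ih (r - i) (by omega) fun k hk₁ hk₂ => hs k hk₁ (by omega)
    have hζ := differentiableAt_riemannZeta_const_mul
      (natCast_mul_ne_one_of_ne_one_div (hs (i + 1) (by omega) (by omega)))
    push_cast at hζ
    exact (hZ.const_mul _).mul hζ

theorem multiple_zeta_differentiableAt (r : ℕ) (hr : 1 ≤ r) (s : ℂ)
    (hs : ∀ k : ℕ, 1 ≤ k → k ≤ r → s ≠ 1 / (k : ℂ)) :
    DifferentiableAt ℂ (Z r) s :=
  multiple_zeta_differentiableAt_general r s hs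
end

section
/- Let r ≥ 1 and let k be an integer with 1 ≤ k ≤ r. Then there exists a nonzero real constant C_r(k) whose sign coincides with the sign of (−1)^{r+⌊r/k⌋}, such that (ks − 1)^{⌊r/k⌋} · Z_r(s) tends to C_r(k) as s tends to 1/k (through s ≠ 1/k). In other words, Z_r(s) ∼ C_r(k)·(ks − 1)^{−⌊r/k⌋} as s → 1/k, so Z_r has a pole of order ⌊r/k⌋ at s = 1/k. -/
/-!
Newton's identity writes `Z (r + 1) s` as an average of `± Z (r + 1 - n) s · ζ (n s)` over
`1 ≤ n ≤ r + 1`. Near `s = 1 / k` only the factor `ζ (k s)` has a pole, a simple one with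
`(k s - 1) ζ (k s) → 1`, while `ζ (n / k) < 0` for `n < k`. After multiplying by
`(k s - 1) ^ ⌊(r + 1) / k⌋`, induction on `r` shows that every term of the average converges,
that all limits have the sign `(-1) ^ (r + 1 + ⌊(r + 1) / k⌋)`, and that the term `n = k` (or
`n = 1` when `k > r + 1`) has a nonzero limit.

The negativity of `ζ` on `(0, 1)` comes from the Dirichlet eta function
`η s = (1 - 2 ^ (1 - s)) ζ s`: grouping its alternating series in pairs gives a series of positive
terms for real `s > 0`, converging absolutely and locally uniformly on `0 < re s`, so the identity
extends from `1 < re s` by analytic continuation.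
-/

open Filter Topology Complex

-- In `ComplexOrder`, `0 < z` means that `z` is a positive real number.
open scoped ComplexOrder

lemma norm_ofReal_cpow_neg_sub_le {a : ℝ} (ha : 0 < a) {s : ℂ} (hs : -1 ≤ s.re) :
    ‖(a : ℂ) ^ (-s) - ((a + 1 : ℝ) : ℂ) ^ (-s)‖ ≤ ‖s‖ * a ^ (-s.re - 1) := by
  have hderiv : ∀ t ∈ Set.Icc a (a + 1), HasDerivWithinAt (fun t : ℝ => (t : ℂ) ^ (-s))
      (-s * (t : ℂ) ^ (-s - 1)) (Set.Icc a (a + 1)) t := fun t ht =>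
    ((hasDerivAt_id (t : ℂ)).cpow_const (c := -s) (Or.inl (by
      simpa using ha.trans_le ht.1))).comp_ofReal.hasDerivWithinAt |>.congr_deriv (by simp)
  have hbound : ∀ t ∈ Set.Ico a (a + 1),
      ‖-s * (t : ℂ) ^ (-s - 1)‖ ≤ ‖s‖ * a ^ (-s.re - 1) := fun t ht => by
    rw [norm_mul, norm_neg, norm_cpow_eq_rpow_re_of_pos (ha.trans_le ht.1)]
    gcongr
    exact Real.rpow_le_rpow_of_nonpos ha ht.1 (by simp; linarith)
  rw [norm_sub_rev]
  simpa using norm_image_sub_le_of_norm_deriv_le_segment' hderiv hbound (a + 1) (by simp)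

noncomputable def dirichletEtaTerm (s : ℂ) (m : ℕ) : ℂ :=
  ((2 * m + 1 : ℕ) : ℂ) ^ (-s) - ((2 * m + 2 : ℕ) : ℂ) ^ (-s)

/-- The Dirichlet eta function `∑ (-1)^(n-1) n^(-s)`, with consecutive terms grouped in pairs so
that the series converges absolutely on `0 < re s`. -/
noncomputable def dirichletEta (s : ℂ) : ℂ := ∑' m, dirichletEtaTerm s m

lemma norm_dirichletEtaTerm_le {s : ℂ} (hs : -1 ≤ s.re) (m : ℕ) :
    ‖dirichletEtaTerm s m‖ ≤ ‖s‖ * ((m : ℝ) + 1) ^ (-s.re - 1) := by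
  have h := norm_ofReal_cpow_neg_sub_le (a := 2 * m + 1) (by positivity) hs
  calc ‖dirichletEtaTerm s m‖ ≤ ‖s‖ * (2 * (m : ℝ) + 1) ^ (-s.re - 1) := by
        rw [dirichletEtaTerm]
        convert h using 4 <;> push_cast <;> ring
    _ ≤ ‖s‖ * ((m : ℝ) + 1) ^ (-s.re - 1) := by
        gcongr ‖s‖ * ?_
        exact Real.rpow_le_rpow_of_nonpos (by positivity) (by linarith) (by linarith)

lemma summable_natCast_add_one_rpow {p : ℝ} (hp : p < -1) :
    Summable fun m : ℕ => ((m : ℝ) + 1) ^ p := by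
  simpa using (summable_nat_add_iff 1).mpr (Real.summable_nat_rpow.mpr hp)

lemma differentiableOn_dirichletEta : DifferentiableOn ℂ dirichletEta {s | 0 < s.re} := by
  intro z (hz : 0 < z.re)
  set U := {s : ℂ | z.re / 2 < s.re} ∩ Metric.ball 0 (‖z‖ + 1)
  have hU : IsOpen U := (isOpen_lt continuous_const continuous_re).inter Metric.isOpen_ball
  have hzU : z ∈ U := ⟨show z.re / 2 < z.re by linarith, by simp⟩
  refine (DifferentiableOn.differentiableAt ?_ (hU.mem_nhds hzU)).differentiableWithinAt
  refine differentiableOn_tsum_of_summable_norm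
    ((summable_natCast_add_one_rpow (p := -(z.re / 2) - 1) (by linarith)).mul_left (‖z‖ + 1))
    (fun m => ?_) hU (fun m s ⟨(hre : z.re / 2 < s.re), hs⟩ => ?_)
  · refine Differentiable.differentiableOn (Differentiable.sub ?_ ?_) <;>
      exact Differentiable.const_cpow (by fun_prop) (Or.inl (by norm_cast))
  · refine (norm_dirichletEtaTerm_le (by linarith) m).trans ?_
    have : ‖s‖ < ‖z‖ + 1 := by simpa using hs
    gcongr
    linarith

lemma dirichletEta_eq_mul_riemannZeta_of_one_lt_re {s : ℂ} (hs : 1 < s.re) :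
    dirichletEta s = (1 - 2 ^ (1 - s)) * riemannZeta s := by
  set f : ℕ → ℂ := fun n => ((n + 1 : ℕ) : ℂ) ^ (-s)
  have hf : HasSum f (riemannZeta s) := by
    simpa [f, LSeries.term, cpow_neg] using (hasSum_nat_add_iff' 1).mpr (LSeriesHasSum_one hs)
  have hodd : HasSum (fun m => f (2 * m + 1)) (2 ^ (-s) * riemannZeta s) := by
    refine (hf.mul_left (2 ^ (-s))).congr_fun fun m => ?_
    simp only [f]
    rw [show 2 * m + 1 + 1 = 2 * (m + 1) by ring, Nat.cast_mul, natCast_mul_natCast_cpow]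
    norm_num
  have heven : HasSum (fun m => f (2 * m)) (riemannZeta s - 2 ^ (-s) * riemannZeta s) := by
    obtain ⟨e, hE⟩ := hf.summable.comp_injective (mul_right_injective₀ two_ne_zero)
    have he : e = riemannZeta s - 2 ^ (-s) * riemannZeta s := by
      linear_combination -hf.unique (hE.even_add_odd hodd)
    exact he ▸ hE
  have h2 : (2 : ℂ) ^ (1 - s) = 2 * 2 ^ (-s) := by
    rw [sub_eq_add_neg, cpow_add _ _ two_ne_zero, cpow_one]
  have heta : dirichletEta s = ∑' m, (f (2 * m) - f (2 * m + 1)) := rfl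
  rw [heta, (heven.sub hodd).tsum_eq, h2]
  ring

lemma summable_dirichletEtaTerm {s : ℂ} (hs : 0 < s.re) : Summable (dirichletEtaTerm s) :=
  .of_norm_bounded ((summable_natCast_add_one_rpow (by linarith)).mul_left ‖s‖)
    (norm_dirichletEtaTerm_le (by linarith))

lemma dirichletEtaTerm_ofReal_pos {x : ℝ} (hx : 0 < x) (m : ℕ) : 0 < dirichletEtaTerm x m := by
  have hlt : ((2 * m + 2 : ℕ) : ℝ) ^ (-x) < ((2 * m + 1 : ℕ) : ℝ) ^ (-x) :=
    Real.rpow_lt_rpow_of_neg (by positivity) (by push_cast; linarith) (by linarith)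
  rw [dirichletEtaTerm, ← ofReal_natCast, ← ofReal_natCast, ← ofReal_neg,
    ← ofReal_cpow (by positivity), ← ofReal_cpow (by positivity), ← ofReal_sub, zero_lt_real]
  linarith

lemma dirichletEta_ofReal_pos {x : ℝ} (hx : 0 < x) : 0 < dirichletEta x :=
  (summable_dirichletEtaTerm (by simpa using hx)).tsum_pos
    (fun m => (dirichletEtaTerm_ofReal_pos hx m).le) 0 (dirichletEtaTerm_ofReal_pos hx 0)

lemma isPreconnected_re_pos_diff_one : IsPreconnected ({s : ℂ | 0 < s.re} \ {1}) := by
  -- two convex sets avoiding `1`, which together with `D` cover the punctured half-plane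
  set A := {s : ℂ | 0 < s.re} ∩ {s | s.re - s.im < 1}
  set B := {s : ℂ | 0 < s.re} ∩ {s | s.re + s.im < 1}
  set D := {s : ℂ | 1 < s.re}
  have hA : Convex ℝ A :=
    (convex_halfSpace_re_gt 0).inter (convex_halfSpace_lt (reLm - imLm).isLinear 1)
  have hB : Convex ℝ B :=
    (convex_halfSpace_re_gt 0).inter (convex_halfSpace_lt (reLm + imLm).isLinear 1)
  have hAD : IsPreconnected (A ∪ D) :=
    hA.isPreconnected.union ⟨2, 2⟩ (by simp [A]) (by simp [D])
      (convex_halfSpace_re_gt 1).isPreconnected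
  have hABD : IsPreconnected (A ∪ D ∪ B) :=
    hAD.union ⟨2, -2⟩ (by simp [D]) (by simp [B]) hB.isPreconnected
  convert hABD using 1
  ext s
  simp only [A, B, D, Set.mem_sdiff, Set.mem_union, Set.mem_inter_iff, Set.mem_ofPred_eq,
    Set.mem_singleton_iff, Complex.ext_iff, one_re, one_im]
  constructor
  · rintro ⟨hre, hne⟩
    by_contra! h
    exact hne ⟨by linarith [h.1.1 hre, h.2 hre], by linarith [h.1.1 hre, h.2 hre]⟩
  · rintro ((⟨h0, h⟩ | h) | ⟨h0, h⟩) <;> refine ⟨by linarith, fun h' => ?_⟩ <;>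
      linarith [h'.1, h'.2]

lemma dirichletEta_eq_mul_riemannZeta {s : ℂ} (hs : 0 < s.re) (hs1 : s ≠ 1) :
    dirichletEta s = (1 - 2 ^ (1 - s)) * riemannZeta s := by
  have hU : IsOpen ({s : ℂ | 0 < s.re} \ {1}) :=
    (isOpen_lt continuous_const continuous_re).sdiff isClosed_singleton
  refine AnalyticOnNhd.eqOn_of_preconnected_of_eventuallyEq (𝕜 := ℂ) (z₀ := 2)
    (f := dirichletEta) (g := fun s => (1 - 2 ^ (1 - s)) * riemannZeta s) ?_ ?_
    isPreconnected_re_pos_diff_one (by norm_num) ?_ ⟨hs, hs1⟩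
  · exact (differentiableOn_dirichletEta.mono Set.sdiff_subset).analyticOnNhd hU
  · refine DifferentiableOn.analyticOnNhd (fun z hz => ?_) hU
    refine DifferentiableAt.differentiableWithinAt (.mul ?_ (differentiableAt_riemannZeta hz.2))
    fun_prop (disch := norm_num)
  · filter_upwards [(isOpen_lt continuous_const continuous_re).mem_nhds
      (show (1 : ℝ) < (2 : ℂ).re by norm_num)] with z hz
    exact dirichletEta_eq_mul_riemannZeta_of_one_lt_re hz

lemma riemannZeta_neg_of_mem_Ioo {x : ℝ} (hx : x ∈ Set.Ioo 0 1) : riemannZeta x < 0 := by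
  have hx1 : (x : ℂ) ≠ 1 := by exact_mod_cast hx.2.ne
  have hc : (1 - 2 ^ (1 - (x : ℂ))) = ((1 - 2 ^ (1 - x) : ℝ) : ℂ) := by
    rw [ofReal_sub, ofReal_one, ofReal_cpow zero_le_two]
    norm_num
  have hc_neg : 1 - (2 : ℝ) ^ (1 - x) < 0 := by
    linarith [Real.one_lt_rpow one_lt_two (by linarith [hx.2] : 0 < 1 - x)]
  have h := dirichletEta_eq_mul_riemannZeta (by simpa using hx.1) hx1
  rw [hc] at h
  have : riemannZeta x = dirichletEta x * ((1 - (2 : ℝ) ^ (1 - x))⁻¹ : ℝ) := by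
    rw [h, ofReal_inv, mul_comm, ← mul_assoc, inv_mul_cancel₀ (ofReal_ne_zero.mpr hc_neg.ne),
      one_mul]
  rw [this]
  exact mul_neg_of_pos_of_neg (dirichletEta_ofReal_pos hx.1)
    (by exact_mod_cast inv_lt_zero.mpr hc_neg)

lemma tendsto_const_mul_nhdsNE {G₀ : Type*} [GroupWithZero G₀] [TopologicalSpace G₀]
    [ContinuousMul G₀] {c : G₀} (hc : c ≠ 0) (a : G₀) :
    Tendsto (c * ·) (𝓝[≠] a) (𝓝[≠] (c * a)) := by
  rw [← smul_eq_mul, punctured_nhds_smul₀ hc]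
  exact tendsto_map

section PoleAtOneDivK

variable {k : ℕ}

lemma tendsto_natCast_mul_sub_one_pow (hk : k ≠ 0) (d : ℕ) :
    Tendsto (fun s : ℂ => ((k : ℂ) * s - 1) ^ d) (𝓝[≠] (1 / k)) (𝓝 (0 ^ d)) := by
  have h := ((by fun_prop : Continuous fun s : ℂ => ((k : ℂ) * s - 1) ^ d).tendsto (1 / k))
  rw [mul_one_div_cancel (by exact_mod_cast hk), sub_self] at h
  exact h.mono_left nhdsWithin_le_nhds

/-- The limit of `(k s - 1) ^ d * ζ (n s)` as `s → 1 / k`; it exists unless `n = k` and `d = 0`. -/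
noncomputable def zetaPoleFactor (k n d : ℕ) : ℂ :=
  if n = k then 0 ^ (d - 1) else 0 ^ d * riemannZeta (n / k)

lemma tendsto_pow_mul_riemannZeta (hk : k ≠ 0) {n d : ℕ} (hd : n = k → d ≠ 0) :
    Tendsto (fun s : ℂ => ((k : ℂ) * s - 1) ^ d * riemannZeta (n * s)) (𝓝[≠] (1 / k))
      (𝓝 (zetaPoleFactor k n d)) := by
  rw [zetaPoleFactor]
  split_ifs with hn
  · subst hn
    have hks := tendsto_const_mul_nhdsNE (c := (n : ℂ)) (by exact_mod_cast hk) (1 / n)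
    rw [mul_one_div_cancel (by exact_mod_cast hk)] at hks
    have hpole := riemannZeta_residue_one.comp hks
    have h := (tendsto_natCast_mul_sub_one_pow hk (d - 1)).mul hpole
    rw [mul_one] at h
    refine h.congr fun s => ?_
    rw [Function.comp_apply, ← mul_assoc, ← pow_succ,
      Nat.sub_add_cancel (Nat.pos_of_ne_zero (hd rfl))]
  · have hne : (n : ℂ) * (1 / k) ≠ 1 := by
      rw [mul_one_div, Ne, div_eq_one_iff_eq (by exact_mod_cast hk)]
      exact_mod_cast hn
    have hζ : Tendsto (fun s : ℂ => riemannZeta (n * s)) (𝓝[≠] (1 / k))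
        (𝓝 (riemannZeta (n / k))) := by
      have h := (differentiableAt_riemannZeta hne).continuousAt.comp
        (by fun_prop : ContinuousAt (fun s : ℂ => (n : ℂ) * s) (1 / k))
      simpa only [Function.comp_def, mul_one_div] using h.tendsto.mono_left nhdsWithin_le_nhds
    exact (tendsto_natCast_mul_sub_one_pow hk d).mul hζ

lemma zetaPoleFactor_sign_pos {n d : ℕ} (h : n = k ∧ d = 1 ∨ 0 < n ∧ n < k ∧ d = 0) :
    0 < (-1) ^ (d + 1) * zetaPoleFactor k n d := by
  rcases h with ⟨rfl, rfl⟩ | ⟨hn0, hnk, rfl⟩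
  · simp [zetaPoleFactor]
  · have hk : (0 : ℝ) < k := by exact_mod_cast hn0.trans hnk
    have hζ := riemannZeta_neg_of_mem_Ioo (x := n / k)
      ⟨by positivity, (div_lt_one hk).mpr (by exact_mod_cast hnk)⟩
    push_cast at hζ
    simpa [zetaPoleFactor, hnk.ne] using hζ

lemma zetaPoleFactor_sign_nonneg {n d : ℕ} (hn : 0 < n) (hd : k ≤ n → d ≠ 0) :
    0 ≤ (-1) ^ (d + 1) * zetaPoleFactor k n d := by
  by_cases h : n = k ∧ d = 1 ∨ 0 < n ∧ n < k ∧ d = 0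
  · exact (zetaPoleFactor_sign_pos h).le
  · have : zetaPoleFactor k n d = 0 := by
      rw [zetaPoleFactor]
      split_ifs with hnk
      · exact zero_pow (by omega)
      · rw [zero_pow (by omega), zero_mul]
    simp [this]

lemma exists_tendsto_pow_mul_Z_mul_riemannZeta (hk : k ≠ 0) {j n : ℕ} (hn : 0 < n) {c : ℂ}
    (hc : 0 < (-1) ^ (j + j / k) * c)
    (hlim : Tendsto (fun s : ℂ => ((k : ℂ) * s - 1) ^ (j / k) * Z j s) (𝓝[≠] (1 / k))
      (𝓝 c)) :
    ∃ t : ℂ, 0 ≤ (-1) ^ (j + (j + n) / k + 1) * t ∧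
      (n = k ∨ n < k ∧ (j + n) / k = j / k → 0 < (-1) ^ (j + (j + n) / k + 1) * t) ∧
      Tendsto (fun s : ℂ => ((k : ℂ) * s - 1) ^ ((j + n) / k) * (Z j s * riemannZeta (n * s)))
        (𝓝[≠] (1 / k)) (𝓝 t) := by
  set d := (j + n) / k - j / k
  have hsplit : j / k + d = (j + n) / k := Nat.add_sub_cancel' (Nat.div_le_div_right (by omega))
  have hd : k ≤ n → d ≠ 0 := fun hkn => by
    have : j / k + 1 ≤ (j + n) / k := by
      rw [← Nat.add_div_right _ (Nat.pos_of_ne_zero hk)]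
      exact Nat.div_le_div_right (by omega)
    omega
  have hsign : (-1) ^ (j + (j + n) / k + 1) * (c * zetaPoleFactor k n d) =
      ((-1) ^ (j + j / k) * c) * ((-1) ^ (d + 1) * zetaPoleFactor k n d) := by
    rw [← hsplit]
    ring
  refine ⟨c * zetaPoleFactor k n d, ?_, fun h => ?_, ?_⟩
  · rw [hsign]
    exact mul_nonneg hc.le (zetaPoleFactor_sign_nonneg hn hd)
  · rw [hsign]
    refine mul_pos hc (zetaPoleFactor_sign_pos ?_)
    rcases h with rfl | ⟨hnk, hdiv⟩
    · rw [Nat.add_div_right _ (Nat.pos_of_ne_zero hk)] at hsplit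
      omega
    · omega
  · refine (hlim.mul (tendsto_pow_mul_riemannZeta hk fun h => hd h.ge)).congr fun s => ?_
    rw [← hsplit, pow_add]
    ring

lemma exists_tendsto_pow_mul_Z_succ (hk : k ≠ 0) {r : ℕ}
    (ih : ∀ j ≤ r, ∃ c : ℂ, 0 < (-1) ^ (j + j / k) * c ∧
      Tendsto (fun s : ℂ => ((k : ℂ) * s - 1) ^ (j / k) * Z j s) (𝓝[≠] (1 / k)) (𝓝 c)) :
    ∃ c : ℂ, 0 < (-1) ^ (r + 1 + (r + 1) / k) * c ∧
      Tendsto (fun s : ℂ => ((k : ℂ) * s - 1) ^ ((r + 1) / k) * Z (r + 1) s) (𝓝[≠] (1 / k))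
        (𝓝 c) := by
  choose c hc_sign hc_lim using fun i => ih (r - i) (Nat.sub_le r i)
  choose t ht_nonneg ht_pos ht_lim using fun i =>
    exists_tendsto_pow_mul_Z_mul_riemannZeta hk (n := i + 1) i.succ_pos (hc_sign i) (hc_lim i)
  have hsum {i : ℕ} (hi : i ∈ Finset.range (r + 1)) : r - i + (i + 1) = r + 1 := by
    simp only [Finset.mem_range] at hi
    omega
  have hsign {i : ℕ} (hi : i ∈ Finset.range (r + 1)) :
      (-1) ^ (r + 1 + (r + 1) / k) * ((-1) ^ i * t i) =
        (-1) ^ (r - i + (r - i + (i + 1)) / k + 1) * t i := by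
    rw [hsum hi]
    nth_rw 1 [← hsum hi]
    ring_nf
    simp [pow_mul']
  have hpos : ∃ i ∈ Finset.range (r + 1),
      0 < (-1) ^ (r + 1 + (r + 1) / k) * ((-1) ^ i * t i) := by
    by_cases hkr : k ≤ r + 1
    · have hi : k - 1 ∈ Finset.range (r + 1) := by simp; omega
      exact ⟨k - 1, hi, hsign hi ▸ ht_pos _ (.inl (by omega))⟩
    · refine ⟨0, by simp, hsign (i := 0) (by simp) ▸ ht_pos _ (.inr ⟨by omega, ?_⟩)⟩
      rw [Nat.div_eq_of_lt (by omega : r - 0 + (0 + 1) < k),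
        Nat.div_eq_of_lt (by omega : r - 0 < k)]
  have hr_inv : (0 : ℂ) < 1 / ((r : ℂ) + 1) := by
    rw [show (1 : ℂ) / ((r : ℂ) + 1) = ((1 / ((r : ℝ) + 1) : ℝ) : ℂ) by push_cast; rfl]
    exact zero_lt_real.mpr (by positivity)
  refine ⟨1 / ((r : ℂ) + 1) * ∑ i ∈ Finset.range (r + 1), (-1) ^ i * t i, ?_, ?_⟩
  · rw [mul_left_comm, Finset.mul_sum]
    exact mul_pos hr_inv (Finset.sum_pos' (fun i hi => hsign hi ▸ ht_nonneg i) hpos)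
  · refine ((tendsto_finsetSum _ fun i _ => (ht_lim i).const_mul ((-1) ^ i)).const_mul _).congr
      fun s => ?_
    simp only [Z, Finset.mul_sum]
    refine Finset.sum_congr rfl fun i hi => ?_
    rw [hsum hi]
    push_cast
    ring

lemma exists_tendsto_pow_mul_Z (hk : k ≠ 0) (r : ℕ) :
    ∃ c : ℂ, 0 < (-1) ^ (r + r / k) * c ∧
      Tendsto (fun s : ℂ => ((k : ℂ) * s - 1) ^ (r / k) * Z r s) (𝓝[≠] (1 / k))
        (𝓝 c) := by
  induction r using Nat.strong_induction_on with
  | _ r ih =>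
    cases r with
    | zero => exact ⟨1, by simp, by simp [Z]⟩
    | succ r => exact exists_tendsto_pow_mul_Z_succ hk fun j hj => ih j (by omega)

end PoleAtOneDivK

lemma exists_eq_ofReal_of_neg_one_pow_mul_pos {c : ℂ} {m : ℕ} (h : 0 < (-1) ^ m * c) :
    ∃ C : ℝ, 0 < (-1) ^ m * C ∧ c = C := by
  have hre := Complex.eq_re_of_ofReal_le h.le
  refine ⟨(-1) ^ m * ((-1) ^ m * c).re, ?_, ?_⟩
  · rw [← mul_assoc, ← pow_add, ← two_mul, pow_mul, neg_one_sq, one_pow, one_mul]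
    exact (Complex.pos_iff.mp h).1
  · push_cast
    rw [← hre, ← mul_assoc, ← pow_add, ← two_mul, pow_mul, neg_one_sq, one_pow, one_mul]

theorem multiple_zeta_asymptotic_at_pole_general (r k : ℕ) (hk1 : 1 ≤ k) :
    ∃ C : ℝ, 0 < (-1 : ℝ) ^ (r + r / k) * C ∧
      Tendsto (fun s : ℂ => ((k : ℂ) * s - 1) ^ (r / k) * Z r s)
        (𝓝[≠] (1 / (k : ℂ))) (𝓝 (C : ℂ)) := by
  obtain ⟨c, hc, hlim⟩ := exists_tendsto_pow_mul_Z (by omega : k ≠ 0) r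
  obtain ⟨C, hC, rfl⟩ := exists_eq_ofReal_of_neg_one_pow_mul_pos hc
  exact ⟨C, hC, hlim⟩

theorem multiple_zeta_asymptotic_at_pole (r k : ℕ) (hr : 1 ≤ r) (hk1 : 1 ≤ k)
    (hkr : k ≤ r) :
    ∃ C : ℝ, 0 < (-1 : ℝ) ^ (r + r / k) * C ∧
      Tendsto (fun s : ℂ => ((k : ℂ) * s - 1) ^ (r / k) * Z r s)
        (𝓝[≠] (1 / (k : ℂ))) (𝓝 (C : ℂ)) :=
  multiple_zeta_asymptotic_at_pole_general r k hk1
end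

section
/- For every integer r ≥ 1, (s − 1)^r · Z_r(s) tends to 1/r! as s tends to 1 (through s ≠ 1); that is, the leading coefficient C_r(1) of Z_r at its pole of order r at s = 1, in the variable (s − 1), equals 1/r!. -/
/-!
Multiply the recursion for `Z (r + 1)` by `(s - 1) ^ (r + 1)` and distribute the power as
`(s - 1) ^ (r - i) · (s - 1) ^ (i + 1)` over the `i`-th term. By induction the first factor
tends to `1 / (r - i)!`; the second, `(s - 1) ^ (i + 1) · ζ((i + 1) s)`, tends to the residue
`1` of `ζ` at `1` for `i = 0`, and to `0` for `i ≥ 1`, where `ζ` is holomorphic at `i + 1`.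
Only the term `i = 0` survives, giving `1 / (r + 1) · 1 / r! = 1 / (r + 1)!`.
-/

open Filter Topology Complex

lemma sub_one_pow_succ_mul_Z_succ (r : ℕ) (s : ℂ) :
    (s - 1) ^ (r + 1) * Z (r + 1) s = 1 / ((r : ℂ) + 1) *
      ∑ i ∈ Finset.range (r + 1), (-1 : ℂ) ^ i * ((s - 1) ^ (r - i) * Z (r - i) s) *
        ((s - 1) ^ (i + 1) * riemannZeta (((i : ℂ) + 1) * s)) := by
  rw [Z, mul_left_comm, Finset.mul_sum]
  congr 1
  refine Finset.sum_congr rfl fun i hi => ?_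
  have hi : i ≤ r := Nat.lt_succ_iff.mp (Finset.mem_range.mp hi)
  rw [show r + 1 = (r - i) + (i + 1) by omega, pow_add]
  ring

lemma tendsto_riemannZeta_const_mul_nhdsNE_one {c : ℂ} (hc : c ≠ 1) :
    Tendsto (fun s : ℂ => riemannZeta (c * s)) (𝓝[≠] 1) (𝓝 (riemannZeta c)) := by
  have hζ : ContinuousAt riemannZeta c := (differentiableAt_riemannZeta hc).continuousAt
  have hmul : Tendsto (fun s : ℂ => c * s) (𝓝[≠] 1) (𝓝 c) := by
    simpa using ((continuous_const_mul c).tendsto 1).mono_left nhdsWithin_le_nhds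
  exact hζ.tendsto.comp hmul

lemma tendsto_sub_one_pow_succ_mul_riemannZeta_nat_succ_mul (i : ℕ) :
    Tendsto (fun s : ℂ => (s - 1) ^ (i + 1) * riemannZeta (((i : ℂ) + 1) * s)) (𝓝[≠] 1)
      (𝓝 (if i = 0 then 1 else 0)) := by
  rcases Nat.eq_zero_or_pos i with rfl | hi
  · simpa using riemannZeta_residue_one
  · have hpow : Tendsto (fun s : ℂ => (s - 1) ^ (i + 1)) (𝓝[≠] 1) (𝓝 0) := by
      have hcont : ContinuousAt (fun s : ℂ => (s - 1) ^ (i + 1)) 1 := by fun_prop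
      simpa using hcont.tendsto.mono_left nhdsWithin_le_nhds
    have hne : (i : ℂ) + 1 ≠ 1 := by
      rw [Ne, add_eq_right]
      exact_mod_cast hi.ne'
    simpa [hi.ne'] using hpow.mul (tendsto_riemannZeta_const_mul_nhdsNE_one hne)

theorem multiple_zeta_leading_coeff_at_one_general (r : ℕ) :
    Tendsto (fun s : ℂ => (s - 1) ^ r * Z r s) (𝓝[≠] (1 : ℂ))
      (𝓝 (1 / (Nat.factorial r : ℂ))) := by
  induction r using Nat.strong_induction_on with
  | _ r ih =>
    rcases r with _ | r
    · simp [Z]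
    have hterm : ∀ i ∈ Finset.range (r + 1),
        Tendsto (fun s : ℂ => (-1 : ℂ) ^ i * ((s - 1) ^ (r - i) * Z (r - i) s) *
          ((s - 1) ^ (i + 1) * riemannZeta (((i : ℂ) + 1) * s))) (𝓝[≠] 1)
          (𝓝 ((-1 : ℂ) ^ i * (1 / ((r - i).factorial : ℂ)) * (if i = 0 then 1 else 0))) :=
      fun i _ => ((ih (r - i) (by omega)).const_mul _).mul
        (tendsto_sub_one_pow_succ_mul_riemannZeta_nat_succ_mul i)
    have hlim : 1 / ((r : ℂ) + 1) * ∑ i ∈ Finset.range (r + 1),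
        (-1 : ℂ) ^ i * (1 / ((r - i).factorial : ℂ)) * (if i = 0 then 1 else 0)
          = 1 / ((r + 1).factorial : ℂ) := by
      simp [Nat.factorial_succ, mul_comm]
    simpa only [sub_one_pow_succ_mul_Z_succ, hlim] using
      (tendsto_finsetSum _ hterm).const_mul (1 / ((r : ℂ) + 1))

theorem multiple_zeta_leading_coeff_at_one (r : ℕ) (hr : 1 ≤ r) :
    Tendsto (fun s : ℂ => (s - 1) ^ r * Z r s) (𝓝[≠] (1 : ℂ))
      (𝓝 (1 / (Nat.factorial r : ℂ))) :=
  multiple_zeta_leading_coeff_at_one_general r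
end

section
/- Let r ≥ 3 and let k be an integer with r/2 < k ≤ r − 1. Then (ks − 1)·Z_r(s) tends to ((−1)^{k−1}/k)·Z_{r−k}(1/k) as s tends to 1/k (through s ≠ 1/k); that is, the leading coefficient C_r(k) of Z_r at its simple pole s = 1/k, in the variable (ks − 1), equals ((−1)^{k−1}/k)·Z_{r−k}(1/k). -/
open Filter Topology Complex

/-!
Multiply Newton's recursion for `Z m` by `k s - 1`. Only the term with `ζ (k s)` has a pole at
`s = 1 / k`, and it contributes `(-1) ^ (k - 1) Z (m - k) (1 / k)`, because `m - k < k` makes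
`Z (m - k)` regular there. Each other term is `(k s - 1) Z (m - j) s` times a regular factor, so
induction on `m < 2 k` gives its limit, which vanishes unless `m - j ≥ k`. The surviving terms
are `(-1) ^ (k - 1) / k` times Newton's recursion for `(m - k) Z (m - k)` at `1 / k`, and
`(1 + (m - k) / k) / m = 1 / k`.
-/

theorem natCast_mul_Z (m : ℕ) (s : ℂ) :
    (m : ℂ) * Z m s = ∑ i ∈ Finset.range m,
      (-1 : ℂ) ^ i * Z (m - 1 - i) s * riemannZeta (((i : ℂ) + 1) * s) := by
  cases m with
  | zero => simp
  | succ n =>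
    rw [Z, ← mul_assoc, Nat.cast_succ, mul_one_div_cancel (Nat.cast_add_one_ne_zero n), one_mul]
    simp only [Nat.add_sub_cancel]

theorem Z_eq_sum {m : ℕ} (hm : m ≠ 0) (s : ℂ) :
    Z m s = 1 / (m : ℂ) * ∑ i ∈ Finset.range m,
      (-1 : ℂ) ^ i * Z (m - 1 - i) s * riemannZeta (((i : ℂ) + 1) * s) := by
  rw [← natCast_mul_Z, ← mul_assoc, one_div_mul_cancel (Nat.cast_ne_zero.2 hm), one_mul]

theorem continuousAt_riemannZeta_const_mul {c s₀ : ℂ} (h : c * s₀ ≠ 1) :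
    ContinuousAt (fun s => riemannZeta (c * s)) s₀ :=
  (differentiableAt_riemannZeta h).continuousAt.comp (continuousAt_id.const_mul c)

theorem continuousAt_Z {s₀ : ℂ} (m : ℕ) (h : ∀ i < m, ((i : ℂ) + 1) * s₀ ≠ 1) :
    ContinuousAt (Z m) s₀ := by
  induction m using Nat.strong_induction_on with
  | _ m ih =>
    rcases eq_or_ne m 0 with rfl | hm
    · rw [show Z 0 = fun _ => 1 from funext fun _ => by rw [Z]]
      exact continuousAt_const
    rw [show Z m = _ from funext (Z_eq_sum hm)]
    refine continuousAt_const.mul (tendsto_finsetSum _ fun i hi => ?_)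
    have hi : i < m := Finset.mem_range.1 hi
    exact (continuousAt_const.mul (ih _ (by omega) fun j hj => h j (by omega))).mul
      (continuousAt_riemannZeta_const_mul (h i hi))

theorem tendsto_sub_one_mul_riemannZeta_const_mul {c : ℂ} (hc : c ≠ 0) :
    Tendsto (fun s => (c * s - 1) * riemannZeta (c * s)) (𝓝[≠] (1 / c)) (𝓝 1) := by
  have : Tendsto (fun s => c * s) (𝓝[≠] (1 / c)) (𝓝[≠] 1) := by
    refine tendsto_nhdsWithin_iff.2 ⟨?_, ?_⟩
    · simpa [one_div, mul_inv_cancel₀ hc] using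
        ((continuous_const_mul c).tendsto (1 / c)).mono_left nhdsWithin_le_nhds
    · filter_upwards [self_mem_nhdsWithin] with s hs
      exact fun h => hs ((eq_div_iff hc).2 (by rw [mul_comm]; exact h))
  exact riemannZeta_residue_one.comp this

theorem natCast_add_one_mul_one_div_ne_one {i k : ℕ} (h : i + 1 ≠ k) :
    ((i : ℂ) + 1) * (1 / (k : ℂ)) ≠ 1 := by
  rcases eq_or_ne k 0 with rfl | hk
  · simp
  rw [mul_one_div, Ne, div_eq_one_iff_eq (Nat.cast_ne_zero.2 hk)]
  exact_mod_cast h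

theorem continuousAt_Z_one_div {m k : ℕ} (hm : m < k) : ContinuousAt (Z m) (1 / (k : ℂ)) :=
  continuousAt_Z m fun i hi => natCast_add_one_mul_one_div_ne_one (by omega)

theorem tendsto_sub_one_mul_Z_of_lt {m k : ℕ} (hk : k ≠ 0) (hm : m < k) :
    Tendsto (fun s : ℂ => ((k : ℂ) * s - 1) * Z m s) (𝓝[≠] (1 / (k : ℂ))) (𝓝 0) := by
  have hlin : ContinuousAt (fun s : ℂ => (k : ℂ) * s - 1) (1 / (k : ℂ)) := by fun_prop
  have := (hlin.mul (continuousAt_Z_one_div hm)).tendsto.mono_left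
    (nhdsWithin_le_nhds (s := {1 / (k : ℂ)}ᶜ))
  rwa [Pi.mul_apply, mul_one_div_cancel (Nat.cast_ne_zero.2 hk : (k : ℂ) ≠ 0), sub_self,
    zero_mul] at this

noncomputable def poleCoeff (k m : ℕ) : ℂ :=
  if k ≤ m then (-1) ^ (k - 1) / (k : ℂ) * Z (m - k) (1 / (k : ℂ)) else 0

theorem sum_erase_poleCoeff {k m : ℕ} (hkm : k ≤ m) (hm : m < 2 * k) :
    ∑ i ∈ (Finset.range m).erase (k - 1),
        (-1 : ℂ) ^ i * poleCoeff k (m - 1 - i) * riemannZeta (((i : ℂ) + 1) * (1 / (k : ℂ))) =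
      (-1) ^ (k - 1) / (k : ℂ) * ((m - k : ℕ) * Z (m - k) (1 / (k : ℂ))) := by
  rw [natCast_mul_Z, Finset.mul_sum, ← Finset.sum_subset (s₁ := Finset.range (m - k))]
  · refine Finset.sum_congr rfl fun i hi => ?_
    have hi := Finset.mem_range.1 hi
    rw [poleCoeff, if_pos (by omega), show m - 1 - i - k = m - k - 1 - i by omega]
    ring
  · intro i hi
    simp only [Finset.mem_erase, Finset.mem_range] at hi ⊢
    omega
  · intro i _ hi
    rw [poleCoeff, if_neg (by simp only [Finset.mem_range] at hi; omega), mul_zero, zero_mul]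

theorem sub_one_mul_Z_eq {k m : ℕ} (hk : k ≠ 0) (hkm : k ≤ m) (s : ℂ) :
    ((k : ℂ) * s - 1) * Z m s = 1 / (m : ℂ) *
      ((-1) ^ (k - 1) * Z (m - k) s * (((k : ℂ) * s - 1) * riemannZeta ((k : ℂ) * s)) +
        ∑ i ∈ (Finset.range m).erase (k - 1), (-1 : ℂ) ^ i *
          (((k : ℂ) * s - 1) * Z (m - 1 - i) s) * riemannZeta (((i : ℂ) + 1) * s)) := by
  rw [Z_eq_sum (by omega), mul_left_comm, Finset.mul_sum,
    ← Finset.add_sum_erase _ _ (Finset.mem_range.2 (by omega : k - 1 < m))]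
  have hk1 : ((k - 1 : ℕ) : ℂ) + 1 = k := by exact_mod_cast Nat.sub_add_cancel (by omega)
  rw [show m - 1 - (k - 1) = m - k by omega, hk1]
  congr 2
  · ring
  · exact Finset.sum_congr rfl fun i _ => by ring

theorem tendsto_sub_one_mul_Z {k : ℕ} (hk : k ≠ 0) (m : ℕ) (hm : m < 2 * k) :
    Tendsto (fun s : ℂ => ((k : ℂ) * s - 1) * Z m s) (𝓝[≠] (1 / (k : ℂ)))
      (𝓝 (poleCoeff k m)) := by
  induction m using Nat.strong_induction_on with
  | _ m ih =>
  rcases lt_or_ge m k with hmk | hkm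
  · simpa [poleCoeff, hmk.not_ge] using tendsto_sub_one_mul_Z_of_lt hk hmk
  have pole : Tendsto (fun s : ℂ => (-1) ^ (k - 1) * Z (m - k) s *
      (((k : ℂ) * s - 1) * riemannZeta ((k : ℂ) * s))) (𝓝[≠] (1 / (k : ℂ)))
      (𝓝 ((-1) ^ (k - 1) * Z (m - k) (1 / (k : ℂ)) * 1)) :=
    ((continuousAt_const.mul (continuousAt_Z_one_div (by omega))).tendsto.mono_left
      nhdsWithin_le_nhds).mul (tendsto_sub_one_mul_riemannZeta_const_mul (Nat.cast_ne_zero.2 hk))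
  have regular : Tendsto (fun s : ℂ => ∑ i ∈ (Finset.range m).erase (k - 1), (-1 : ℂ) ^ i *
      (((k : ℂ) * s - 1) * Z (m - 1 - i) s) * riemannZeta (((i : ℂ) + 1) * s))
      (𝓝[≠] (1 / (k : ℂ))) (𝓝 (∑ i ∈ (Finset.range m).erase (k - 1), (-1 : ℂ) ^ i *
        poleCoeff k (m - 1 - i) * riemannZeta (((i : ℂ) + 1) * (1 / (k : ℂ))))) := by
    refine tendsto_finsetSum _ fun i hi => ?_
    obtain ⟨hik, hi⟩ := Finset.mem_erase.1 hi
    have hi := Finset.mem_range.1 hi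
    have hζ := continuousAt_riemannZeta_const_mul
      (natCast_add_one_mul_one_div_ne_one (i := i) (k := k) (by omega))
    exact (tendsto_const_nhds.mul (ih _ (by omega) (by omega))).mul
      (hζ.tendsto.mono_left nhdsWithin_le_nhds)
  simp_rw [sub_one_mul_Z_eq hk hkm]
  convert (pole.add regular).const_mul (1 / (m : ℂ)) using 2
  rw [sum_erase_poleCoeff hkm hm, poleCoeff, if_pos hkm]
  have hmC : (m : ℂ) ≠ 0 := Nat.cast_ne_zero.2 (by omega)
  push_cast [Nat.cast_sub hkm]
  field_simp
  ring

theorem multiple_zeta_leading_coeff_large_k_general (r k : ℕ)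
    (hk : r < 2 * k) (hkr : k ≤ r - 1) :
    Tendsto (fun s : ℂ => ((k : ℂ) * s - 1) * Z r s) (𝓝[≠] (1 / (k : ℂ)))
      (𝓝 ((-1 : ℂ) ^ (k - 1) / (k : ℂ) * Z (r - k) (1 / (k : ℂ)))) := by
  have h := tendsto_sub_one_mul_Z (k := k) (by omega) r hk
  rwa [poleCoeff, if_pos (by omega)] at h

theorem multiple_zeta_leading_coeff_large_k (r k : ℕ) (hr : 3 ≤ r)
    (hk : r < 2 * k) (hkr : k ≤ r - 1) :
    Tendsto (fun s : ℂ => ((k : ℂ) * s - 1) * Z r s) (𝓝[≠] (1 / (k : ℂ)))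
      (𝓝 ((-1 : ℂ) ^ (k - 1) / (k : ℂ) * Z (r - k) (1 / (k : ℂ)))) :=
  multiple_zeta_leading_coeff_large_k_general r k hk hkr
end

section
/- There exists a constant C > 0 such that for every integer r ≥ 1, |Σ_{k=2}^{r} ⌊r/k⌋ − (r·log r − 2(1 − γ)·r)| ≤ C·r^{1/2}, where γ is the Euler–Mascheroni constant. That is, Σ_{k=2}^{r} ⌊r/k⌋ = r log r − 2(1 − γ) r + O(r^{1/2}). -/
/-!
Dirichlet's hyperbola method: with `s = ⌊√r⌋`, counting the lattice points `a * b ≤ r` gives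
`∑_{k ≤ r} ⌊r/k⌋ = 2 ∑_{k ≤ s} ⌊r/k⌋ - s²`. Dropping the floors in the short sum costs at most
`s`, and `∑_{k ≤ s} r/k = r (log s + γ + O(1/s))`. Since `s² ≤ r < (s + 1)²`, both `2 log s` and
`log r` agree up to `O(1/s)` and `r - s² = O(s)`, so every error is `O(r / s + s) = O(√r)`.
-/

open Finset Real

namespace Nat

theorem filter_Ioc_mul_le_eq_Ioc {b r m n : ℕ} (hb : 0 < b) (hrn : r / b ≤ n) :
    {a ∈ Ioc m n | a * b ≤ r} = Ioc m (r / b) := by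
  ext a
  simp only [mem_filter, mem_Ioc, ← Nat.le_div_iff_mul_le hb]
  omega

/-- Both sides count the lattice points `(a, b)` with `a * b ≤ r`, `√r < a` and `b ≤ √r`. -/
theorem sum_Ioc_sqrt_div (r : ℕ) :
    ∑ a ∈ Ioc r.sqrt r, r / a = ∑ b ∈ Ioc 0 r.sqrt, (r / b - r.sqrt) := by
  have hcount : ∀ a ∈ Ioc r.sqrt r, r / a = #{b ∈ Ioc 0 r.sqrt | a * b ≤ r} := by
    intro a ha
    rw [mem_Ioc] at ha
    have hra : r / a ≤ r.sqrt :=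
      Nat.lt_succ_iff.mp <| (Nat.div_lt_iff_lt_mul (by omega)).mpr <|
        (Nat.lt_succ_sqrt r).trans_le (Nat.mul_le_mul_left _ ha.1)
    simp_rw [mul_comm a, filter_Ioc_mul_le_eq_Ioc (by omega : 0 < a) hra, Nat.card_Ioc,
      Nat.sub_zero]
  rw [sum_congr rfl hcount]
  simp_rw [card_filter]
  rw [sum_comm]
  refine sum_congr rfl fun b hb => ?_
  rw [← card_filter, filter_Ioc_mul_le_eq_Ioc (mem_Ioc.mp hb).1 (Nat.div_le_self r b),
    Nat.card_Ioc]

theorem sum_Ioc_div_add_sqrt_mul_sqrt (r : ℕ) :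
    ∑ k ∈ Ioc 0 r, r / k + r.sqrt * r.sqrt = 2 * ∑ k ∈ Ioc 0 r.sqrt, r / k := by
  have hsqrt_le_div : ∀ b ∈ Ioc 0 r.sqrt, r.sqrt ≤ r / b := fun b hb =>
    (Nat.le_div_iff_mul_le (mem_Ioc.mp hb).1).mpr <|
      (Nat.mul_le_mul_left _ (mem_Ioc.mp hb).2).trans (Nat.sqrt_le r)
  have hhead : ∑ b ∈ Ioc 0 r.sqrt, (r / b - r.sqrt) + r.sqrt * r.sqrt
      = ∑ b ∈ Ioc 0 r.sqrt, r / b := by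
    have hsq : ∑ _b ∈ Ioc 0 r.sqrt, r.sqrt = r.sqrt * r.sqrt := by simp
    rw [← hsq, ← sum_add_distrib]
    exact sum_congr rfl fun b hb => Nat.sub_add_cancel (hsqrt_le_div b hb)
  rw [← sum_Ioc_consecutive _ (Nat.zero_le _) (Nat.sqrt_le_self r), sum_Ioc_sqrt_div]
  omega

end Nat

namespace Real

theorem log_add_one_sub_log_le_inv {x : ℝ} (hx : 0 < x) : log (x + 1) - log x ≤ x⁻¹ := by
  rw [← log_div (by positivity) hx.ne']
  calc log ((x + 1) / x) ≤ (x + 1) / x - 1 := log_le_sub_one_of_pos (by positivity)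
    _ = x⁻¹ := by field_simp; ring

theorem eulerMascheroniConstant_lt_harmonic_sub_log {n : ℕ} (hn : n ≠ 0) :
    eulerMascheroniConstant < harmonic n - log n := by
  simpa [eulerMascheroniSeq', hn] using eulerMascheroniConstant_lt_eulerMascheroniSeq' n

theorem harmonic_sub_log_le_eulerMascheroniConstant_add_inv {n : ℕ} (hn : n ≠ 0) :
    harmonic n - log n ≤ eulerMascheroniConstant + (n : ℝ)⁻¹ := by
  have hγ := eulerMascheroniSeq_lt_eulerMascheroniConstant n
  have hlog := log_add_one_sub_log_le_inv (Nat.cast_pos.mpr (Nat.pos_of_ne_zero hn))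
  rw [eulerMascheroniSeq] at hγ
  linarith

theorem two_mul_log_sqrt_le_log (r : ℕ) : 2 * log r.sqrt ≤ log r := by
  rcases Nat.eq_zero_or_pos r.sqrt with hs | hs
  · simp [hs, log_natCast_nonneg]
  rw [two_mul, ← log_mul (by positivity) (by positivity)]
  exact log_le_log (by positivity) (by exact_mod_cast Nat.sqrt_le r)

theorem log_le_two_mul_log_sqrt_add {r : ℕ} (hr : r ≠ 0) :
    log r ≤ 2 * log r.sqrt + 2 / r.sqrt := by
  have hs : (0 : ℝ) < r.sqrt := by exact_mod_cast Nat.sqrt_pos.mpr (Nat.pos_of_ne_zero hr)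
  have hr_lt : (r : ℝ) < (r.sqrt + 1) * (r.sqrt + 1) := by exact_mod_cast Nat.lt_succ_sqrt r
  calc log r ≤ log ((r.sqrt + 1) * (r.sqrt + 1)) := log_le_log (by positivity) hr_lt.le
    _ = 2 * log (r.sqrt + 1) := by rw [log_mul (by positivity) (by positivity), two_mul]
    _ ≤ 2 * log r.sqrt + 2 / r.sqrt := by
      have := log_add_one_sub_log_le_inv hs
      rw [div_eq_mul_inv]
      linarith

end Real

theorem sum_Ioc_cast_div_eq_mul_harmonic (r n : ℕ) :
    ∑ k ∈ Ioc 0 n, (r : ℝ) / k = r * harmonic n := by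
  rw [harmonic_eq_sum_Icc, Rat.cast_sum, mul_sum]
  exact sum_congr rfl fun k _ => by push_cast; rfl

theorem sum_Ioc_cast_div_le_mul_harmonic (r n : ℕ) :
    ∑ k ∈ Ioc 0 n, ((r / k : ℕ) : ℝ) ≤ r * harmonic n := by
  rw [← sum_Ioc_cast_div_eq_mul_harmonic]
  exact sum_le_sum fun k _ => Nat.cast_div_le

theorem mul_harmonic_sub_le_sum_Ioc_cast_div (r n : ℕ) :
    r * harmonic n - n ≤ ∑ k ∈ Ioc 0 n, ((r / k : ℕ) : ℝ) := by
  have hfloor : ∀ k ∈ Ioc 0 n, (r : ℝ) / k - 1 ≤ ((r / k : ℕ) : ℝ) := fun k _ => by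
    have := Nat.lt_floor_add_one ((r : ℝ) / k)
    rw [Nat.floor_div_eq_div] at this
    linarith
  simpa [sum_Ioc_cast_div_eq_mul_harmonic] using sum_le_sum hfloor

theorem abs_two_mul_harmonic_sqrt_sub_le {r : ℕ} (hr : r ≠ 0) :
    |2 * r * harmonic r.sqrt - (r * log r + 2 * eulerMascheroniConstant * r)| ≤
      2 * (r / r.sqrt) := by
  have hs : r.sqrt ≠ 0 := (Nat.sqrt_pos.mpr (Nat.pos_of_ne_zero hr)).ne'
  have hγ_lt := eulerMascheroniConstant_lt_harmonic_sub_log hs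
  have hγ_le := harmonic_sub_log_le_eulerMascheroniConstant_add_inv hs
  have hlog_ge := two_mul_log_sqrt_le_log r
  have hlog_le := log_le_two_mul_log_sqrt_add hr
  rw [div_eq_mul_inv] at hlog_le
  have hr_nonneg : (0 : ℝ) ≤ r := r.cast_nonneg
  have hharm := mul_le_mul_of_nonneg_left
    (show harmonic r.sqrt - log r.sqrt - eulerMascheroniConstant ≤ (r.sqrt : ℝ)⁻¹ by linarith)
    hr_nonneg
  have hharm₀ := mul_nonneg hr_nonneg
    (show 0 ≤ harmonic r.sqrt - log r.sqrt - eulerMascheroniConstant by linarith)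
  have hlog := mul_le_mul_of_nonneg_left
    (show log r - 2 * log r.sqrt ≤ 2 * (r.sqrt : ℝ)⁻¹ by linarith) hr_nonneg
  have hlog₀ := mul_nonneg hr_nonneg (show 0 ≤ log r - 2 * log r.sqrt by linarith)
  rw [abs_le, div_eq_mul_inv]
  constructor <;> linarith

theorem cast_div_sqrt_le_three_mul_sqrt {r : ℕ} (hr : r ≠ 0) :
    (r : ℝ) / r.sqrt ≤ 3 * √r := by
  have hs : (1 : ℝ) ≤ r.sqrt := by exact_mod_cast Nat.sqrt_pos.mpr (Nat.pos_of_ne_zero hr)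
  have hr_le : (r : ℝ) ≤ r.sqrt * r.sqrt + r.sqrt + r.sqrt := by exact_mod_cast Nat.sqrt_le_add r
  have hsqrt : (r.sqrt : ℝ) ≤ √r := nat_sqrt_le_real_sqrt
  rw [div_le_iff₀ (by positivity)]
  nlinarith

theorem sum_floor_div_asymptotic :
    ∃ C : ℝ, 0 < C ∧ ∀ r : ℕ, 1 ≤ r →
      |((∑ k ∈ Finset.Icc 2 r, r / k : ℕ) : ℝ) -
        ((r : ℝ) * Real.log r - 2 * (1 - Real.eulerMascheroniConstant) * r)| ≤
      C * Real.sqrt r := by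
  refine ⟨8, by norm_num, fun r hr => ?_⟩
  have hr0 : r ≠ 0 := Nat.one_le_iff_ne_zero.mp hr
  have hsplit : ∑ k ∈ Ioc 0 r, r / k = r + ∑ k ∈ Icc 2 r, r / k := by
    rw [← sum_Ioc_consecutive _ zero_le_one hr, show Ioc 0 1 = {1} from rfl, sum_singleton,
      Nat.div_one]
    rfl
  have hhyperbola := Nat.sum_Ioc_div_add_sqrt_mul_sqrt r
  have hfloor_le := sum_Ioc_cast_div_le_mul_harmonic r r.sqrt
  have hfloor_ge := mul_harmonic_sub_le_sum_Ioc_cast_div r r.sqrt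
  obtain ⟨hmain_ge, hmain_le⟩ := abs_le.mp (abs_two_mul_harmonic_sqrt_sub_le hr0)
  have hsqrt_div := cast_div_sqrt_le_three_mul_sqrt hr0
  have hsqrt : (r.sqrt : ℝ) ≤ √r := nat_sqrt_le_real_sqrt
  have hsq_le : (r.sqrt : ℝ) * r.sqrt ≤ r := by exact_mod_cast Nat.sqrt_le r
  have hle_sq : (r : ℝ) ≤ r.sqrt * r.sqrt + r.sqrt + r.sqrt := by exact_mod_cast Nat.sqrt_le_add r
  have hcast : ((∑ k ∈ Icc 2 r, r / k : ℕ) : ℝ) =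
      2 * ∑ k ∈ Ioc 0 r.sqrt, ((r / k : ℕ) : ℝ) - r - r.sqrt * r.sqrt := by
    rw [eq_sub_iff_add_eq, eq_sub_iff_add_eq]
    exact_mod_cast (by omega : ∑ k ∈ Icc 2 r, r / k + r.sqrt * r.sqrt + r =
      2 * ∑ k ∈ Ioc 0 r.sqrt, r / k)
  rw [hcast, abs_le]
  constructor <;> linarith
end

section
/- Let r and j be integers with r ≥ 6 and 3 ≤ j ≤ r − 3. Then (r − j)^{r−j} · j^{j} < (r − 1)^{r−1}. -/
/-!
The sequence `(n + 1) ^ (n + 1) / n ^ n` is nondecreasing (Bernoulli's inequality), so moving a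
unit from the smaller to the larger of two numbers `a ≤ b` does not decrease `a ^ a * b ^ b`.
Pushing the smaller number down to `3` gives `a ^ a * b ^ b ≤ 3 ^ 3 * (a + b - 3) ^ (a + b - 3)`,
and `27 * n ^ n < (n + 2) ^ (n + 2)` for `n ≥ 3` because `(n + 2) ^ n ≥ 3 * n ^ n` and
`(n + 2) ^ 2 ≥ 25`.
-/

/-- Bernoulli's inequality `(1 - 1 / (M + 1)) ^ k ≥ 1 - k / (M + 1)`, cleared of denominators. -/
lemma Nat.add_one_pow_succ_le (M k : ℕ) :
    (M + 1) ^ (k + 1) ≤ M ^ k * (M + 1) + k * (M + 1) ^ k := by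
  induction k with
  | zero => simp
  | succ k ih =>
    have hM : M ^ k ≤ (M + 1) ^ k := Nat.pow_le_pow_left (Nat.le_succ M) k
    calc (M + 1) ^ (k + 1 + 1) = (M + 1) ^ (k + 1) * (M + 1) := pow_succ _ _
      _ ≤ (M ^ k * (M + 1) + k * (M + 1) ^ k) * (M + 1) := by gcongr
      _ = M ^ (k + 1) * (M + 1) + M ^ k * (M + 1) + k * (M + 1) ^ (k + 1) := by ring
      _ ≤ M ^ (k + 1) * (M + 1) + (M + 1) ^ k * (M + 1) + k * (M + 1) ^ (k + 1) := by gcongr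
      _ = M ^ (k + 1) * (M + 1) + (k + 1) * (M + 1) ^ (k + 1) := by ring

lemma Nat.pow_self_succ_sq_le (k : ℕ) : ((k + 1) ^ (k + 1)) ^ 2 ≤ k ^ k * (k + 2) ^ (k + 2) := by
  -- Bernoulli at `M = k * (k + 2)`, where `M + 1 = (k + 1) ^ 2`
  have bernoulli : (k * (k + 2) + 1) ^ k * (k ^ 2 + k + 1) + k * (k * (k + 2) + 1) ^ k
      ≤ (k * (k + 2)) ^ k * (k + 1) ^ 2 + k * (k * (k + 2) + 1) ^ k :=
    calc _ = (k * (k + 2) + 1) ^ (k + 1) := by ring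
      _ ≤ _ := Nat.add_one_pow_succ_le _ _
      _ = _ := by ring
  have hX : ((k + 1) ^ (k + 1)) ^ 2 = (k * (k + 2) + 1) ^ k * (k + 1) ^ 2 := by
    rw [← pow_mul, mul_comm, pow_mul, pow_succ]
    ring
  have hY : k ^ k * (k + 2) ^ (k + 2) = (k * (k + 2)) ^ k * (k + 2) ^ 2 := by
    rw [mul_pow]
    ring
  rw [hX, hY]
  generalize (k * (k + 2) + 1) ^ k = X at bernoulli ⊢
  generalize (k * (k + 2)) ^ k = Y at bernoulli ⊢
  refine Nat.le_of_mul_le_mul_right (c := k ^ 2 + k + 1) ?_ (by positivity)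
  calc X * (k + 1) ^ 2 * (k ^ 2 + k + 1) = X * (k ^ 2 + k + 1) * (k + 1) ^ 2 := by ring
    _ ≤ Y * (k + 1) ^ 2 * (k + 1) ^ 2 := Nat.mul_le_mul_right _ (by omega)
    _ ≤ Y * (k + 2) ^ 2 * (k ^ 2 + k + 1) := by
        rw [mul_assoc, mul_assoc]
        exact Nat.mul_le_mul_left Y (by nlinarith)

lemma Nat.pow_self_succ_mul_pow_self_le {m n : ℕ} (hmn : m ≤ n) :
    (m + 1) ^ (m + 1) * n ^ n ≤ m ^ m * (n + 1) ^ (n + 1) := by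
  induction n, hmn using Nat.le_induction with
  | base => rw [mul_comm]
  | succ n _ ih =>
    refine Nat.le_of_mul_le_mul_right (c := n ^ n) ?_ Nat.pow_self_pos
    calc (m + 1) ^ (m + 1) * (n + 1) ^ (n + 1) * n ^ n
        = (m + 1) ^ (m + 1) * n ^ n * (n + 1) ^ (n + 1) := by ring
      _ ≤ m ^ m * (n + 1) ^ (n + 1) * (n + 1) ^ (n + 1) := by gcongr
      _ = m ^ m * ((n + 1) ^ (n + 1)) ^ 2 := by ring
      _ ≤ m ^ m * (n ^ n * (n + 2) ^ (n + 2)) := by gcongr; exact Nat.pow_self_succ_sq_le n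
      _ = m ^ m * (n + 1 + 1) ^ (n + 1 + 1) * n ^ n := by ring

lemma Nat.pow_self_mul_pow_self_le_pow_self_mul_pow_self {a b c d : ℕ} (hca : c ≤ a) (hab : a ≤ b)
    (hsum : a + b = c + d) : a ^ a * b ^ b ≤ c ^ c * d ^ d := by
  induction a, hca using Nat.le_induction generalizing b with
  | base => rw [Nat.add_left_cancel hsum]
  | succ a _ ih =>
    calc (a + 1) ^ (a + 1) * b ^ b ≤ a ^ a * (b + 1) ^ (b + 1) :=
          Nat.pow_self_succ_mul_pow_self_le (by omega)
      _ ≤ c ^ c * d ^ d := ih (by omega) (by omega)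

lemma Nat.three_mul_pow_self_le_add_two_pow {n : ℕ} (hn : n ≠ 0) : 3 * n ^ n ≤ (n + 2) ^ n :=
  calc 3 * n ^ n = n ^ n + n * n ^ (n - 1) * 2 := by rw [mul_pow_sub_one hn]; ring
    _ ≤ (n + 2) ^ n := pow_add_mul_le_add_pow (Nat.zero_le n) (by omega) n

lemma Nat.three_pow_three_mul_pow_self_lt {n : ℕ} (hn : 3 ≤ n) : 3 ^ 3 * n ^ n < (n + 2) ^ (n + 2) :=
  calc 3 ^ 3 * n ^ n < 25 * (3 * n ^ n) := by have := @Nat.pow_self_pos n; omega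
    _ ≤ (n + 2) ^ 2 * (n + 2) ^ n := by
        gcongr
        · nlinarith
        · exact Nat.three_mul_pow_self_le_add_two_pow (by omega)
    _ = (n + 2) ^ (n + 2) := by ring

theorem pow_mul_pow_lt_general (r j : ℕ) (hj3 : 3 ≤ j) (hjr : j ≤ r - 3) :
    (r - j) ^ (r - j) * j ^ j < (r - 1) ^ (r - 1) := by
  have hbalance : (r - j) ^ (r - j) * j ^ j ≤ 3 ^ 3 * (r - 3) ^ (r - 3) := by
    rcases le_total j (r - j) with h | h
    · rw [mul_comm]
      exact Nat.pow_self_mul_pow_self_le_pow_self_mul_pow_self hj3 h (by omega)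
    · exact Nat.pow_self_mul_pow_self_le_pow_self_mul_pow_self (by omega) h (by omega)
  rw [show r - 1 = r - 3 + 2 by omega]
  exact hbalance.trans_lt (Nat.three_pow_three_mul_pow_self_lt (by omega))

theorem pow_mul_pow_lt (r j : ℕ) (hr : 6 ≤ r) (hj3 : 3 ≤ j) (hjr : j ≤ r - 3) :
    (r - j) ^ (r - j) * j ^ j < (r - 1) ^ (r - 1) :=
  pow_mul_pow_lt_general r j hj3 hjr
end

section
/- Let r ≥ 1 be an odd integer. Then r·Z_r(−k)/ζ(−rk) tends to 1 as k tends to +∞ through odd positive integers; that is, Z_r(−k) ∼ (1/r)·ζ(−rk) as odd k → +∞, where ζ is the Riemann zeta function. (For odd positive k and odd r, the product rk is odd, so ζ(−rk) ≠ 0.) -/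
open Filter Topology Complex

/-! For odd `k`, Newton's recursion writes `r · Z_r(-k)` as `ζ(-rk)` (the summand `i = r - 1`, with
sign `+1` because `r` is odd) plus `r - 1` summands `± Z_{r-1-i}(-k) ζ(-(i+1)k)`. Put
`Φ(n) = n! / (2π)^n`. The functional equation gives `|ζ(-n)| ≤ Φ(n)` for all `n` and
`|ζ(-n)| ≥ Φ(n) / π` for odd `n`. Since `a! b! ≤ (a+b)!`, `Φ(a) Φ(b) ≤ Φ(a+b)`, and induction on the
recursion gives `|Z_r(-k)| ≤ Φ(rk)`. For `a, b ≥ 1` even `Φ(a) Φ(b) ≤ Φ(a+b) / (a+b)`, so each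
remaining summand is at most `Φ(rk) / (rk)` and the relative error is at most `π / k`. -/

open scoped Real Nat

noncomputable def factorialDivTwoPiPow (n : ℕ) : ℝ := n ! / (2 * π) ^ n

lemma factorialDivTwoPiPow_pos (n : ℕ) : 0 < factorialDivTwoPiPow n := by
  unfold factorialDivTwoPiPow
  positivity

lemma factorialDivTwoPiPow_mul_le (a b : ℕ) :
    factorialDivTwoPiPow a * factorialDivTwoPiPow b ≤ factorialDivTwoPiPow (a + b) := by
  unfold factorialDivTwoPiPow
  rw [div_mul_div_comm, ← pow_add]
  gcongr
  exact_mod_cast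
    Nat.le_of_dvd (Nat.factorial_pos _) (Nat.factorial_mul_factorial_dvd_factorial_add a b)

lemma factorial_succ_mul_factorial_succ_le (a b : ℕ) : (a + 1)! * (b + 1)! ≤ (a + b + 1)! := by
  induction a with
  | zero => simp
  | succ a ih =>
    calc (a + 1 + 1)! * (b + 1)! = (a + 2) * ((a + 1)! * (b + 1)!) := by
          rw [Nat.factorial_succ (a + 1), mul_assoc]
      _ ≤ (a + b + 2) * (a + b + 1)! := Nat.mul_le_mul (by omega) ih
      _ = (a + 1 + b + 1)! := by
          rw [show a + 1 + b + 1 = (a + b + 1) + 1 by omega, Nat.factorial_succ (a + b + 1)]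

lemma factorial_mul_factorial_mul_add_le {a b : ℕ} (ha : 0 < a) (hb : 0 < b) :
    a ! * b ! * (a + b) ≤ (a + b)! := by
  obtain ⟨a, rfl⟩ := Nat.exists_eq_add_of_lt ha
  obtain ⟨b, rfl⟩ := Nat.exists_eq_add_of_lt hb
  simp only [zero_add]
  calc (a + 1)! * (b + 1)! * (a + 1 + (b + 1)) ≤ (a + b + 1)! * (a + b + 1 + 1) :=
        Nat.mul_le_mul (factorial_succ_mul_factorial_succ_le a b) (by omega)
    _ = (a + 1 + (b + 1))! := by
        rw [show a + 1 + (b + 1) = (a + b + 1) + 1 by omega, Nat.factorial_succ (a + b + 1),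
          mul_comm]

lemma factorialDivTwoPiPow_mul_le_div {a b : ℕ} (ha : 0 < a) (hb : 0 < b) :
    factorialDivTwoPiPow a * factorialDivTwoPiPow b ≤ factorialDivTwoPiPow (a + b) / (a + b) := by
  have hab : (0 : ℝ) < a + b := by positivity
  rw [le_div_iff₀ hab]
  unfold factorialDivTwoPiPow
  rw [div_mul_div_comm, ← pow_add, div_mul_eq_mul_div]
  gcongr
  exact_mod_cast factorial_mul_factorial_mul_add_le ha hb

lemma riemannZeta_natCast_eq_ofReal_tsum {n : ℕ} (hn : 1 < n) :
    riemannZeta n = ((∑' m : ℕ, 1 / (m : ℝ) ^ n : ℝ) : ℂ) := by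
  rw [zeta_nat_eq_tsum_of_gt_one hn, Complex.ofReal_tsum]
  push_cast
  rfl

lemma one_le_norm_riemannZeta_natCast {n : ℕ} (hn : 1 < n) : 1 ≤ ‖riemannZeta n‖ := by
  have hsum : Summable (fun m : ℕ => 1 / (m : ℝ) ^ n) := Real.summable_one_div_nat_pow.2 hn
  rw [riemannZeta_natCast_eq_ofReal_tsum hn, Complex.norm_real, Real.norm_eq_abs]
  calc (1 : ℝ) = 1 / ((1 : ℕ) : ℝ) ^ n := by simp
    _ ≤ ∑' m : ℕ, 1 / (m : ℝ) ^ n := hsum.le_tsum 1 (fun m _ => by positivity)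
    _ ≤ _ := le_abs_self _

lemma norm_riemannZeta_natCast_le {n : ℕ} (hn : 1 < n) : ‖riemannZeta n‖ ≤ π ^ 2 / 6 := by
  have hsum : Summable (fun m : ℕ => 1 / (m : ℝ) ^ n) := Real.summable_one_div_nat_pow.2 hn
  rw [riemannZeta_natCast_eq_ofReal_tsum hn, Complex.norm_real, Real.norm_eq_abs,
    abs_of_nonneg (tsum_nonneg fun m => by positivity), ← hasSum_zeta_two.tsum_eq]
  refine hsum.tsum_le_tsum (fun m => ?_) hasSum_zeta_two.summable
  rcases m.eq_zero_or_pos with rfl | hm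
  · simp [zero_pow (by omega : n ≠ 0)]
  · exact one_div_le_one_div_of_le (by positivity) (pow_le_pow_right₀ (by exact_mod_cast hm) hn)

lemma riemannZeta_neg_natCast_of_even {n : ℕ} (hn : Even n) (h0 : n ≠ 0) :
    riemannZeta (-(n : ℂ)) = 0 := by
  obtain ⟨m, rfl⟩ : ∃ m, n = 2 * (m + 1) := by
    obtain ⟨l, rfl⟩ := hn
    exact ⟨l - 1, by omega⟩
  simpa using riemannZeta_neg_two_mul_nat_add_one m

lemma norm_riemannZeta_neg_natCast_of_odd {n : ℕ} (hn : Odd n) :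
    ‖riemannZeta (-(n : ℂ))‖ = factorialDivTwoPiPow n / π * ‖riemannZeta (n + 1)‖ := by
  have hpole : ∀ m : ℕ, (n + 1 : ℂ) ≠ -m := fun m h => by
    have := congrArg re h
    simp only [add_re, natCast_re, one_re, neg_re] at this
    linarith [m.cast_nonneg (α := ℝ), n.cast_nonneg (α := ℝ)]
  have hone : (n + 1 : ℂ) ≠ 1 := by simpa using hn.pos.ne'
  have hcos : ‖cos (π * (n + 1 : ℂ) / 2)‖ = 1 := by
    obtain ⟨l, rfl⟩ := hn
    rw [show (π * (((2 * l + 1 : ℕ) : ℂ) + 1) / 2) = (((l + 1 : ℤ) * π : ℝ) : ℂ) by push_cast; ring,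
      ← ofReal_cos, norm_real, Real.norm_eq_abs, Real.abs_cos_int_mul_pi]
  have hpow : ‖(2 * π : ℂ) ^ (-(n + 1 : ℂ))‖ = ((2 * π) ^ (n + 1))⁻¹ := by
    rw [show -(n + 1 : ℂ) = ((-((n + 1 : ℕ) : ℤ) : ℤ) : ℂ) by push_cast; ring, cpow_intCast,
      norm_zpow, zpow_neg, zpow_natCast, norm_mul, Complex.norm_two, norm_real,
      Real.norm_of_nonneg Real.pi_pos.le]
  rw [show -(n : ℂ) = 1 - (n + 1) by ring, riemannZeta_one_sub hpole hone, Gamma_nat_eq_factorial,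
    norm_mul, norm_mul, norm_mul, norm_mul, hpow, hcos, Complex.norm_two, Complex.norm_natCast,
    factorialDivTwoPiPow, pow_succ]
  field_simp

lemma norm_riemannZeta_neg_natCast_le (n : ℕ) :
    ‖riemannZeta (-(n : ℂ))‖ ≤ factorialDivTwoPiPow n := by
  rcases n.even_or_odd with hn | hn
  · rcases eq_or_ne n 0 with rfl | h0
    · norm_num [riemannZeta_zero, factorialDivTwoPiPow]
    · rw [riemannZeta_neg_natCast_of_even hn h0, norm_zero]
      exact (factorialDivTwoPiPow_pos n).le
  · have hζ : ‖riemannZeta (n + 1)‖ ≤ π ^ 2 / 6 := by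
      exact_mod_cast norm_riemannZeta_natCast_le (n := n + 1) (by have := hn.pos; omega)
    have hπ : π ^ 2 / 6 ≤ π := by nlinarith [Real.pi_pos, Real.pi_lt_four]
    rw [norm_riemannZeta_neg_natCast_of_odd hn, div_mul_eq_mul_div, div_le_iff₀ Real.pi_pos]
    exact mul_le_mul_of_nonneg_left (hζ.trans hπ) (factorialDivTwoPiPow_pos n).le

lemma factorialDivTwoPiPow_div_pi_le_norm_riemannZeta_neg_natCast {n : ℕ} (hn : Odd n) :
    factorialDivTwoPiPow n / π ≤ ‖riemannZeta (-(n : ℂ))‖ := by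
  have hζ : 1 ≤ ‖riemannZeta (n + 1)‖ := by
    exact_mod_cast one_le_norm_riemannZeta_natCast (n := n + 1) (by have := hn.pos; omega)
  rw [norm_riemannZeta_neg_natCast_of_odd hn]
  have := factorialDivTwoPiPow_pos n
  have := Real.pi_pos
  exact le_mul_of_one_le_right (by positivity) hζ

lemma natCast_add_one_mul_Z_succ (t : ℕ) (s : ℂ) :
    ((t : ℂ) + 1) * Z (t + 1) s =
      ∑ i ∈ Finset.range (t + 1),
        (-1 : ℂ) ^ i * Z (t - i) s * riemannZeta (((i : ℂ) + 1) * s) := by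
  rw [Z, ← mul_assoc, mul_one_div_cancel (Nat.cast_add_one_ne_zero t), one_mul]

lemma norm_Z_summand_le {j k : ℕ} (i : ℕ)
    (hZ : ‖Z j (-(k : ℂ))‖ ≤ factorialDivTwoPiPow (j * k)) :
    ‖(-1 : ℂ) ^ i * Z j (-(k : ℂ)) * riemannZeta (((i : ℂ) + 1) * -k)‖ ≤
      factorialDivTwoPiPow (j * k) * factorialDivTwoPiPow ((i + 1) * k) := by
  rw [norm_mul, norm_mul, norm_pow, norm_neg, norm_one, one_pow, one_mul,
    show ((i : ℂ) + 1) * -k = -(((i + 1) * k : ℕ) : ℂ) by push_cast; ring]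
  exact mul_le_mul hZ (norm_riemannZeta_neg_natCast_le _) (norm_nonneg _)
    (factorialDivTwoPiPow_pos _).le

lemma norm_Z_neg_natCast_le (r k : ℕ) : ‖Z r (-(k : ℂ))‖ ≤ factorialDivTwoPiPow (r * k) := by
  induction r using Nat.strong_induction_on with
  | _ r ih =>
    rcases r with _ | t
    · simp [Z, factorialDivTwoPiPow]
    have hsummand : ∀ i ∈ Finset.range (t + 1),
        ‖(-1 : ℂ) ^ i * Z (t - i) (-(k : ℂ)) * riemannZeta (((i : ℂ) + 1) * -k)‖ ≤
          factorialDivTwoPiPow ((t + 1) * k) := fun i hi => by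
      have hi : t - i + (i + 1) = t + 1 := by have := Finset.mem_range.1 hi; omega
      calc _ ≤ factorialDivTwoPiPow ((t - i) * k) * factorialDivTwoPiPow ((i + 1) * k) :=
            norm_Z_summand_le i (ih _ (by omega))
        _ ≤ factorialDivTwoPiPow ((t + 1) * k) :=
            (factorialDivTwoPiPow_mul_le _ _).trans_eq (by rw [← add_mul, hi])
    have hsum := (norm_sum_le _ _).trans (Finset.sum_le_sum hsummand)
    rw [← natCast_add_one_mul_Z_succ, norm_mul, Finset.sum_const, Finset.card_range,
      nsmul_eq_mul] at hsum
    have ht : ‖(t : ℂ) + 1‖ = (t + 1 : ℕ) := by exact_mod_cast Complex.norm_natCast (t + 1)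
    rw [ht] at hsum
    exact le_of_mul_le_mul_left hsum (by positivity)

lemma norm_natCast_add_one_mul_Z_sub_riemannZeta_le (t : ℕ) {k : ℕ} (hk : 0 < k) :
    ‖((t : ℂ) + 1) * Z (t + 1) (-(k : ℂ)) - (-1) ^ t * riemannZeta (((t : ℂ) + 1) * -k)‖ ≤
      factorialDivTwoPiPow ((t + 1) * k) / k := by
  have hsummand : ∀ i ∈ Finset.range t,
      ‖(-1 : ℂ) ^ i * Z (t - i) (-(k : ℂ)) * riemannZeta (((i : ℂ) + 1) * -k)‖ ≤
        factorialDivTwoPiPow ((t + 1) * k) / ((t + 1) * k) := fun i hi => by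
    have hit := Finset.mem_range.1 hi
    have hi : t - i + (i + 1) = t + 1 := by omega
    calc _ ≤ factorialDivTwoPiPow ((t - i) * k) * factorialDivTwoPiPow ((i + 1) * k) :=
          norm_Z_summand_le i (norm_Z_neg_natCast_le _ _)
      _ ≤ factorialDivTwoPiPow ((t - i) * k + (i + 1) * k) /
            (((t - i) * k : ℕ) + ((i + 1) * k : ℕ)) :=
          factorialDivTwoPiPow_mul_le_div (Nat.mul_pos (by omega) hk) (by positivity)
      _ = factorialDivTwoPiPow ((t + 1) * k) / ((t + 1) * k) := by
          rw [← add_mul, hi, ← Nat.cast_add, ← add_mul, hi]; push_cast; ring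
  rw [natCast_add_one_mul_Z_succ, Finset.sum_range_succ, Nat.sub_self, Z, mul_one,
    add_sub_cancel_right]
  calc _ ≤ ∑ i ∈ Finset.range t, factorialDivTwoPiPow ((t + 1) * k) / ((t + 1) * k) :=
        (norm_sum_le _ _).trans (Finset.sum_le_sum hsummand)
    _ = t / (t + 1) * (factorialDivTwoPiPow ((t + 1) * k) / k) := by
        rw [Finset.sum_const, Finset.card_range, nsmul_eq_mul]; field_simp
    _ ≤ factorialDivTwoPiPow ((t + 1) * k) / k := by
        have := factorialDivTwoPiPow_pos ((t + 1) * k)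
        refine mul_le_of_le_one_left (by positivity) ?_
        rw [div_le_one (by positivity)]; linarith

lemma norm_natCast_mul_Z_div_riemannZeta_sub_one_le {r k : ℕ} (hr : Odd r) (hk : Odd k) :
    ‖(r : ℂ) * Z r (-(k : ℂ)) / riemannZeta (-((r : ℂ) * k)) - 1‖ ≤ π / k := by
  obtain ⟨t, rfl⟩ : ∃ t, r = t + 1 := ⟨r - 1, by have := hr.pos; omega⟩
  have ht : Even t := by simpa [Nat.odd_add_one] using hr
  have hζ := factorialDivTwoPiPow_div_pi_le_norm_riemannZeta_neg_natCast (hr.mul hk)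
  have hΦ := factorialDivTwoPiPow_pos ((t + 1) * k)
  have hpos := (div_pos hΦ Real.pi_pos).trans_le hζ
  have hdiff : ‖((t + 1 : ℕ) : ℂ) * Z (t + 1) (-(k : ℂ)) - riemannZeta (-(((t + 1) * k : ℕ) : ℂ))‖
      ≤ factorialDivTwoPiPow ((t + 1) * k) / k := by
    convert norm_natCast_add_one_mul_Z_sub_riemannZeta_le t hk.pos using 4
    · push_cast; rfl
    · rw [ht.neg_one_pow, one_mul, mul_neg]; push_cast; rfl
  rw [← Nat.cast_mul, div_sub_one (norm_pos_iff.1 hpos), norm_div, div_le_iff₀ hpos]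
  calc _ ≤ factorialDivTwoPiPow ((t + 1) * k) / k := hdiff
    _ = π / k * (factorialDivTwoPiPow ((t + 1) * k) / π) := by field_simp
    _ ≤ π / k * ‖riemannZeta (-(((t + 1) * k : ℕ) : ℂ))‖ := by gcongr

theorem multiple_zeta_asymptotic_odd_negative_general (r : ℕ) (hodd : Odd r) :
    Tendsto
      (fun m : ℕ => (r : ℂ) * Z r (-(2 * (m : ℂ) + 1))
        / riemannZeta (-((r : ℂ) * (2 * (m : ℂ) + 1))))
      atTop (𝓝 1) := by
  have hk : ∀ m : ℕ, 2 * (m : ℂ) + 1 = ((2 * m + 1 : ℕ) : ℂ) := fun m => by push_cast; rfl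
  simp_rw [hk]
  rw [tendsto_iff_norm_sub_tendsto_zero]
  have hodd_atTop : Tendsto (fun m : ℕ => 2 * m + 1) atTop atTop :=
    tendsto_atTop_mono (fun m => show m ≤ 2 * m + 1 by omega) tendsto_id
  exact squeeze_zero (fun _ => norm_nonneg _)
    (fun m => norm_natCast_mul_Z_div_riemannZeta_sub_one_le hodd (odd_two_mul_add_one m))
    ((tendsto_const_div_atTop_nhds_zero_nat π).comp hodd_atTop)

theorem multiple_zeta_asymptotic_odd_negative (r : ℕ) (hr : 1 ≤ r) (hodd : Odd r) :
    Tendsto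
      (fun m : ℕ => (r : ℂ) * Z r (-(2 * (m : ℂ) + 1))
        / riemannZeta (-((r : ℂ) * (2 * (m : ℂ) + 1))))
      atTop (𝓝 1) :=
  multiple_zeta_asymptotic_odd_negative_general r hodd
end
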